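/- arXiv:2404.18303 — 4 statements merged into one kernel-verified Lean document; each statement's English description precedes it below -/
import Mathlib

section
/- Let n ≥ 1 and let ζ be an even integer with 0 < ζ ≤ n. Let |φ⟩ = Σ_i c_i |i⟩ be any vector in ℂ^{2^n} that is a linear combination of computational basis states |i⟩ of Hamming weight exactly ζ. Then for every l with 0 ≤ l ≤ n, 𝒫_{0,ζ}[Π_{2l}(|φ⟩⟨0…0|)] = b_{2l} · |φ⟩⟨0…0|, where b_{2l} = 2^{ζ−n}·binom(n−ζ, l−ζ/2) if ζ/2 ≤ l ≤ n−ζ/2 and b_{2l} = 0 otherwise; moreover Σ_{l=0}^{n} b_{2l} = 1. -/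
open Matrix Finset

noncomputable section

namespace QCQMC

/-- State vectors on `n` qubits, indexed by bitstrings. -/
abbrev QState (n : ℕ) := (Fin n → Bool) → ℂ

/-- Operators (2^n × 2^n matrices) on `n` qubits. -/
abbrev QOp (n : ℕ) := Matrix (Fin n → Bool) (Fin n → Bool) ℂ

/-- Computational basis state `|b⟩`. -/
def ket (n : ℕ) (b : Fin n → Bool) : QState n := fun b' => if b' = b then 1 else 0

/-- The all-zero state `|0…0⟩`. -/
def ket0 (n : ℕ) : QState n := ket n (fun _ => false)

/-- Outer product `|u⟩⟨v|`. -/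
def outer {n : ℕ} (u v : QState n) : QOp n :=
  Matrix.of fun x y => u x * (starRingEnd ℂ) (v y)

/-- Hamming weight of a bitstring. -/
def hamming {n : ℕ} (b : Fin n → Bool) : ℕ := (Finset.univ.filter fun i => b i = true).card

/-- Jordan–Wigner Majorana operator.  The index `μ : Fin (2*n)` (0-indexed) corresponds to
`γ_{μ+1}` in 1-indexed notation:  for `μ = 2j` (0-indexed, qubit `j`) this is
`Z^{⊗j} ⊗ X ⊗ I^{⊗(n-j-1)}`, and for `μ = 2j+1` it is `Z^{⊗j} ⊗ Y ⊗ I^{⊗(n-j-1)}`. -/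
def majorana (n : ℕ) (μ : Fin (2 * n)) : QOp n :=
  Matrix.of fun b b' =>
    if h : (b ⟨μ.1 / 2, by have := μ.2; omega⟩ ≠ b' ⟨μ.1 / 2, by have := μ.2; omega⟩) ∧
        (∀ i : Fin n, i.1 ≠ μ.1 / 2 → b i = b' i) then
      (∏ i : Fin n, if i.1 < μ.1 / 2 ∧ b i = true then (-1 : ℂ) else 1) *
      (if μ.1 % 2 = 0 then 1
       else if b ⟨μ.1 / 2, by have := μ.2; omega⟩ = true then Complex.I else -Complex.I)
    else 0

/-- Majorana string `γ_S`, the product of `γ_μ` for `μ ∈ S` in ascending index order. -/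
def gammaS (n : ℕ) (S : Finset (Fin (2 * n))) : QOp n :=
  ((S.sort (· ≤ ·)).map (majorana n)).prod

/-- The superoperator `Π_{2l}(A) = 2^{-n} Σ_{|S| = 2l} tr(γ_S† A) γ_S`. -/
def PiEven (n l : ℕ) (A : QOp n) : QOp n :=
  ((2 : ℂ) ^ n)⁻¹ •
    ∑ S ∈ Finset.univ.filter (fun S : Finset (Fin (2 * n)) => S.card = 2 * l),
      (Matrix.trace ((gammaS n S)ᴴ * A)) • gammaS n S

/-- Orthogonal projector `P_{0,ζ}` onto the span of `|0…0⟩` and the computational basis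
states of Hamming weight `ζ`. -/
def projZeroZeta (n ζ : ℕ) : QOp n :=
  Matrix.diagonal (fun b => if b = (fun _ => false) ∨ hamming b = ζ then 1 else 0)

/-- The coefficients `b_{2l}`. -/
def bcoef (n ζ l : ℕ) : ℂ :=
  if ζ / 2 ≤ l ∧ l + ζ / 2 ≤ n then
    (2 : ℂ) ^ ζ / 2 ^ n * ((n - ζ).choose (l - ζ / 2)) else 0

/-- `pairs(T) = ∪_{j ∈ T} {2j-1, 2j}` (0-indexed: `{2j, 2j+1}`). -/
def pairsSet (n : ℕ) (T : Finset (Fin n)) : Finset (Fin (2 * n)) :=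
  Finset.univ.filter fun μ : Fin (2 * n) => (⟨μ.1 / 2, by have := μ.2; omega⟩ : Fin n) ∈ T






def jj {n : ℕ} (μ : Fin (2 * n)) : Fin n := ⟨μ.1 / 2, by have := μ.2; omega⟩

lemma majorana_apply {n : ℕ} (μ : Fin (2 * n)) (x w : Fin n → Bool) :
    majorana n μ x w =
      if w = Function.update x (jj μ) (!x (jj μ)) then
        (∏ i : Fin n, if i.1 < μ.1 / 2 ∧ x i = true then (-1 : ℂ) else 1) *
        (if μ.1 % 2 = 0 then 1 else if x (jj μ) = true then Complex.I else -Complex.I)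
      else 0 := by
  have key : ((x (jj μ) ≠ w (jj μ)) ∧ (∀ i : Fin n, i.1 ≠ μ.1 / 2 → x i = w i)) ↔
      w = Function.update x (jj μ) (!x (jj μ)) := by
    constructor
    · intro h
      funext i
      by_cases hi : i = jj μ
      · subst hi; simp only [Function.update_self]
        cases hxi : x (jj μ) <;> cases hwi : w (jj μ) <;> simp_all
      · rw [Function.update_of_ne hi]
        exact (h.2 i (by simpa [jj, Fin.ext_iff] using hi)).symm
    · intro hw
      subst hw
      constructor
      · simp only [Function.update_self]; cases x (jj μ) <;> simp
      · intro i hi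
        rw [Function.update_of_ne (by simpa [jj, Fin.ext_iff] using hi)]
  show (if h : (x (jj μ) ≠ w (jj μ)) ∧ (∀ i : Fin n, i.1 ≠ μ.1 / 2 → x i = w i) then
        (∏ i : Fin n, if i.1 < μ.1 / 2 ∧ x i = true then (-1 : ℂ) else 1) *
        (if μ.1 % 2 = 0 then 1 else if x (jj μ) = true then Complex.I else -Complex.I)
      else 0) = _
  rw [dite_eq_ite, if_congr key rfl rfl]

def fco {n : ℕ} (μ : Fin (2 * n)) (y : Fin n → Bool) : ℂ :=
  (∏ i : Fin n, if i.1 < μ.1 / 2 ∧ y i = true then (-1 : ℂ) else 1) *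
  (if μ.1 % 2 = 0 then 1 else if y (jj μ) = true then -Complex.I else Complex.I)

def mL {n : ℕ} (l : List (Fin (2 * n))) (j : Fin n) : Bool :=
  decide ((l.countP fun μ => decide (jj μ = j)) % 2 = 1)

def bx {n : ℕ} (y m : Fin n → Bool) : Fin n → Bool := fun j => xor (y j) (m j)

lemma jj_le_jj {n : ℕ} {μ ν : Fin (2 * n)} (h : μ ≤ ν) : (jj μ).1 ≤ (jj ν).1 :=
  Nat.div_le_div_right h

lemma prod_map_majorana_apply {n : ℕ} : ∀ (l : List (Fin (2 * n))), l.Pairwise (· < ·) →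
    ∀ x y : Fin n → Bool, ((l.map (majorana n)).prod) x y =
      if x = bx y (mL l) then (l.map (fun μ => fco μ y)).prod else 0 := by
  intro l
  induction l with
  | nil =>
    intro _ x y
    have hm : bx y (mL ([] : List (Fin (2 * n)))) = y := by
      funext j; simp [bx, mL]
    simp [hm, Matrix.one_apply]
  | cons μ0 t ih =>
    intro hs x y
    have hst : t.Pairwise (· < ·) := hs.of_cons
    have hlt : ∀ μ ∈ t, μ0 < μ := fun μ hμ => (List.pairwise_cons.mp hs).1 μ hμ
    set W0 : Fin n → Bool := Function.update x (jj μ0) (!x (jj μ0)) with hW0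
    have hmul : ((List.map (majorana n) (μ0 :: t)).prod) x y =
        ((∏ i : Fin n, if i.1 < μ0.1 / 2 ∧ x i = true then (-1 : ℂ) else 1) *
         (if μ0.1 % 2 = 0 then 1 else if x (jj μ0) = true then Complex.I else -Complex.I)) *
        ((List.map (majorana n) t).prod) W0 y := by
      rw [List.map_cons, List.prod_cons, Matrix.mul_apply]
      rw [Finset.sum_congr rfl (fun w _ => by rw [majorana_apply, ite_mul, zero_mul])]
      rw [Finset.sum_ite_eq' Finset.univ W0
        (fun w => _ * ((List.map (majorana n) t).prod) w y)]
      simp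
    rw [hmul, ih hst W0 y]
    have hcons : ∀ j : Fin n, mL (μ0 :: t) j = if jj μ0 = j then !(mL t j) else mL t j := by
      intro j
      by_cases hj : jj μ0 = j
      · rw [if_pos hj]
        have hc : List.countP (fun μ => decide (jj μ = j)) (μ0 :: t)
            = List.countP (fun μ => decide (jj μ = j)) t + 1 := by
          rw [List.countP_cons]; simp [hj]
        simp only [mL, hc]
        by_cases hmt : (List.countP (fun μ => decide (jj μ = j)) t) % 2 = 1
        · have h1 : ¬ ((List.countP (fun μ => decide (jj μ = j)) t + 1) % 2 = 1) := by omega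
          simp [hmt, h1]
        · have h1 : (List.countP (fun μ => decide (jj μ = j)) t + 1) % 2 = 1 := by omega
          simp [hmt, h1]
      · rw [if_neg hj]
        have hc : List.countP (fun μ => decide (jj μ = j)) (μ0 :: t)
            = List.countP (fun μ => decide (jj μ = j)) t := by
          rw [List.countP_cons]; simp [hj]
        simp only [mL, hc]
    have hflip : ∀ a b c : Bool, ((!a) = xor b c ↔ a = xor b (!c)) := by decide
    have hequiv : (W0 = bx y (mL t)) ↔ (x = bx y (mL (μ0 :: t))) := by
      constructor
      · intro h; funext j
        have h1 := congrFun h j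
        by_cases hj : jj μ0 = j
        · rw [hW0, ← hj, Function.update_self, hj] at h1
          rw [bx] at h1 ⊢
          rw [hcons j, if_pos hj]
          exact (hflip _ _ _).mp h1
        · rw [hW0, Function.update_of_ne (fun hh => hj hh.symm)] at h1
          rw [bx] at h1 ⊢
          rw [hcons j, if_neg hj]
          exact h1
      · intro h; funext j
        have h1 := congrFun h j
        rw [bx, hcons j] at h1
        by_cases hj : jj μ0 = j
        · rw [if_pos hj] at h1
          rw [hW0, ← hj, Function.update_self, hj, bx]
          exact (hflip _ _ _).mpr h1
        · rw [if_neg hj] at h1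
          rw [hW0, Function.update_of_ne (fun hh => hj hh.symm), bx]
          exact h1
    by_cases hcond : x = bx y (mL (μ0 :: t))
    · rw [if_pos (hequiv.mpr hcond), if_pos hcond, List.map_cons, List.prod_cons]
      congr 1
      have hxy : ∀ i : Fin n, i.1 < μ0.1 / 2 → x i = y i := by
        intro i hi
        have hml : mL (μ0 :: t) i = false := by
          simp only [mL, decide_eq_true_eq]
          have hz : (List.countP (fun μ => decide (jj μ = i)) (μ0 :: t)) = 0 := by
            rw [List.countP_eq_zero]
            intro μ hμ
            have hle : μ0 ≤ μ := by
              rcases List.mem_cons.mp hμ with h | h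
              · exact le_of_eq h.symm
              · exact le_of_lt (hlt μ h)
            have hjle : (jj μ0).1 ≤ (jj μ).1 := jj_le_jj hle
            simp only [decide_eq_true_eq]
            intro hc
            rw [hc] at hjle
            simp only [jj] at hjle hi
            omega
          rw [hz]
          simp
        have h1 := congrFun hcond i
        rw [bx, hml] at h1
        simpa using h1
      rw [fco]
      congr 1
      · exact Finset.prod_congr rfl (fun i _ => by
          by_cases hi : i.1 < μ0.1 / 2
          · rw [hxy i hi]
          · simp [hi])
      · by_cases hpar : μ0.1 % 2 = 0
        · rw [if_pos hpar, if_pos hpar]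
        · rw [if_neg hpar, if_neg hpar]
          have hmlj : mL (μ0 :: t) (jj μ0) = true := by
            have hc : List.countP (fun μ => decide (jj μ = jj μ0)) (μ0 :: t)
                = List.countP (fun μ => decide (jj μ = jj μ0)) t + 1 := by
              rw [List.countP_cons]; simp
            have hz : (List.countP (fun μ => decide (jj μ = jj μ0)) t) = 0 := by
              rw [List.countP_eq_zero]
              intro μ hμ
              have h1 : μ0.1 < μ.1 := hlt μ hμ
              simp only [decide_eq_true_eq]
              intro hcq
              have h2 : (jj μ).1 = (jj μ0).1 := by rw [hcq]
              simp only [jj] at h2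
              omega
            simp [mL, hc, hz]
          have h1 := congrFun hcond (jj μ0)
          rw [bx, hmlj] at h1
          cases hy : y (jj μ0) <;> rw [hy] at h1 <;> simp_all
    · rw [if_neg (fun h => hcond (hequiv.mp h)), if_neg hcond, mul_zero]






def mS {n : ℕ} (S : Finset (Fin (2 * n))) (j : Fin n) : Bool :=
  decide ((S.filter fun μ => jj μ = j).card % 2 = 1)
def ph {n : ℕ} (S : Finset (Fin (2 * n))) (y : Fin n → Bool) : ℂ := ∏ μ ∈ S, fco μ y

lemma mL_sort (S : Finset (Fin (2 * n))) : mL (S.sort (· ≤ ·)) = mS S := by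
  funext j
  simp only [mL, mS]
  congr 1
  have h1 : (S.filter fun μ => jj μ = j).card = Multiset.countP (fun μ => decide (jj μ = j)) S.val := by
    rw [Multiset.countP_eq_card_filter, Finset.card, Finset.filter_val]
    congr 1
    exact Multiset.filter_congr (fun a _ => by simp)
  rw [h1, ← Finset.sort_eq S (· ≤ ·), Multiset.coe_countP]
  have h2 : (fun b : Fin (2*n) => decide (decide (jj b = j) = true)) = (fun μ : Fin (2*n) => decide (jj μ = j)) := by
    funext b; simp
  rw [h2]

lemma prod_sort_map (S : Finset (Fin (2 * n))) (f : Fin (2 * n) → ℂ) :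
    ((S.sort (· ≤ ·)).map f).prod = ∏ μ ∈ S, f μ := by
  rw [Finset.prod]
  rw [← Finset.sort_eq S (· ≤ ·), Multiset.map_coe, Multiset.prod_coe]

variable {n : ℕ}





def z0 (n : ℕ) : Fin n → Bool := fun _ => false

lemma bx_z0 (m : Fin n → Bool) : bx (z0 n) m = m := by funext j; simp [bx, z0]

lemma fco_z0 (μ : Fin (2 * n)) : fco μ (z0 n) = if μ.1 % 2 = 0 then 1 else Complex.I := by
  simp [fco, z0]

lemma conj_ph_z0_mul (S : Finset (Fin (2 * n))) :
    (starRingEnd ℂ) (ph S (z0 n)) * ph S (z0 n) = 1 := by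
  rw [ph, map_prod, ← Finset.prod_mul_distrib]
  apply Finset.prod_eq_one
  intro μ _
  rw [fco_z0]
  by_cases h : μ.1 % 2 = 0
  · simp [h]
  · simp [h, Complex.conj_I, Complex.I_mul_I]

lemma gammaS_apply {n : ℕ} (S : Finset (Fin (2 * n))) (x y : Fin n → Bool) :
    gammaS n S x y = if x = bx y (mS S) then ph S y else 0 := by
  rw [gammaS, prod_map_majorana_apply _ (Finset.sortedLT_sort S).pairwise x y, mL_sort,
    prod_sort_map S (fun μ => fco μ y)]
  rfl

lemma trace_gammaS {n : ℕ} (S : Finset (Fin (2 * n))) (φ : QState n) :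
    Matrix.trace ((gammaS n S)ᴴ * outer φ (ket0 n)) =
      (starRingEnd ℂ) (ph S (z0 n)) * φ (mS S) := by
  have hA : ∀ w z : Fin n → Bool, (outer φ (ket0 n)) w z = if z = z0 n then φ w else 0 := by
    intro w z
    by_cases hz : z = z0 n
    · rw [if_pos hz]
      have hz' : z = (fun _ => false) := hz
      simp [outer, ket0, ket, hz']
    · rw [if_neg hz]
      have hz' : ¬ z = (fun _ => false) := hz
      simp [outer, ket0, ket, hz']
  have h1 : Matrix.trace ((gammaS n S)ᴴ * outer φ (ket0 n)) =
      ∑ z : Fin n → Bool, ∑ w : Fin n → Bool,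
        (starRingEnd ℂ) (gammaS n S w z) * (outer φ (ket0 n)) w z := by
    simp [Matrix.trace, Matrix.diag, Matrix.mul_apply, Matrix.conjTranspose_apply]
  rw [h1]
  have h2 : ∀ z : Fin n → Bool,
      (∑ w : Fin n → Bool, (starRingEnd ℂ) (gammaS n S w z) * (outer φ (ket0 n)) w z)
      = if z = z0 n then
          ∑ w : Fin n → Bool, (starRingEnd ℂ) (gammaS n S w (z0 n)) * φ w else 0 := by
    intro z
    by_cases hz : z = z0 n
    · subst hz
      rw [if_pos rfl]
      exact Finset.sum_congr rfl (fun w _ => by rw [hA, if_pos rfl])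
    · rw [if_neg hz]
      apply Finset.sum_eq_zero
      intro w _
      rw [hA, if_neg hz, mul_zero]
  rw [Finset.sum_congr rfl (fun z _ => h2 z), Finset.sum_ite_eq' Finset.univ (z0 n)]
  rw [if_pos (Finset.mem_univ _)]
  have h3 : ∀ w : Fin n → Bool,
      (starRingEnd ℂ) (gammaS n S w (z0 n)) * φ w
      = if w = mS S then (starRingEnd ℂ) (ph S (z0 n)) * φ (mS S) else 0 := by
    intro w
    rw [gammaS_apply, bx_z0]
    by_cases hw : w = mS S
    · rw [if_pos hw, if_pos hw, hw]
    · rw [if_neg hw, if_neg hw, map_zero, zero_mul]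
  rw [Finset.sum_congr rfl (fun w _ => h3 w), Finset.sum_ite_eq' Finset.univ (mS S)]
  rw [if_pos (Finset.mem_univ _)]

def d0 {n : ℕ} (j : Fin n) : Fin (2 * n) := ⟨2 * j.1, by have := j.2; omega⟩
def d1 {n : ℕ} (j : Fin n) : Fin (2 * n) := ⟨2 * j.1 + 1, by have := j.2; omega⟩

lemma jj_d0 {n : ℕ} (j : Fin n) : jj (d0 j) = j := by
  apply Fin.ext; simp [jj, d0]
lemma jj_d1 {n : ℕ} (j : Fin n) : jj (d1 j) = j := by
  apply Fin.ext; simp [jj, d1, Nat.mul_add_div]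
lemma d0_ne_d1 {n : ℕ} (j : Fin n) : d0 j ≠ d1 j := by
  simp [d0, d1, Fin.ext_iff]
lemma d0_even {n : ℕ} (j : Fin n) : (d0 j).1 % 2 = 0 := by simp [d0, Nat.mul_mod_right]
lemma d1_odd {n : ℕ} (j : Fin n) : (d1 j).1 % 2 = 1 := by
  simp [d1, Nat.add_mod, Nat.mul_mod_right]
lemma d0_half {n : ℕ} (j : Fin n) : (d0 j).1 / 2 = j.1 := by simp [d0]
lemma d1_half {n : ℕ} (j : Fin n) : (d1 j).1 / 2 = j.1 := by simp [d1, Nat.mul_add_div]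

lemma eq_d0_or_d1 {n : ℕ} (μ : Fin (2 * n)) : μ = d0 (jj μ) ∨ μ = d1 (jj μ) := by
  have h : μ.1 / 2 = (jj μ).1 := rfl
  by_cases hp : μ.1 % 2 = 0
  · left; apply Fin.ext; simp only [d0]; omega
  · right; apply Fin.ext; simp only [d1]; omega

lemma jj_eq_iff {n : ℕ} (μ : Fin (2 * n)) (j : Fin n) :
    jj μ = j ↔ (μ = d0 j ∨ μ = d1 j) := by
  constructor
  · intro h; rw [← h]; exact eq_d0_or_d1 μ
  · rintro (rfl | rfl)
    · exact jj_d0 j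
    · exact jj_d1 j

lemma fiber_card {n : ℕ} (S : Finset (Fin (2 * n))) (j : Fin n) :
    (S.filter fun μ => jj μ = j).card =
      (if d0 j ∈ S then 1 else 0) + (if d1 j ∈ S then 1 else 0) := by
  have hset : S.filter (fun μ => jj μ = j) = ({d0 j, d1 j} : Finset (Fin (2*n))).filter (· ∈ S) := by
    ext μ
    simp only [Finset.mem_filter, Finset.mem_insert, Finset.mem_singleton, jj_eq_iff]
    tauto
  rw [hset]
  rw [Finset.filter_insert, Finset.filter_singleton]
  by_cases h0 : d0 j ∈ S <;> by_cases h1 : d1 j ∈ S <;>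
    simp [h0, h1, d0_ne_d1 j]

lemma mS_true_iff {n : ℕ} (S : Finset (Fin (2 * n))) (j : Fin n) :
    mS S j = true ↔ ((d0 j ∈ S) ↔ (d1 j ∉ S)) := by
  rw [mS, decide_eq_true_eq, fiber_card]
  by_cases h0 : d0 j ∈ S <;> by_cases h1 : d1 j ∈ S <;> simp [h0, h1]

lemma mS_false_iff {n : ℕ} (S : Finset (Fin (2 * n))) (j : Fin n) :
    mS S j = false ↔ ((d0 j ∈ S) ↔ (d1 j ∈ S)) := by
  rw [mS, decide_eq_false_iff_not, fiber_card]
  by_cases h0 : d0 j ∈ S <;> by_cases h1 : d1 j ∈ S <;> simp [h0, h1]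

def fwdB {n : ℕ} (x : Fin n → Bool) (S : Finset (Fin (2 * n))) : Finset (Fin n) :=
  Finset.univ.filter (fun j => x j = true ∧ d0 j ∈ S)
def fwdD {n : ℕ} (x : Fin n → Bool) (S : Finset (Fin (2 * n))) : Finset (Fin n) :=
  Finset.univ.filter (fun j => x j = false ∧ d0 j ∈ S)
def backSet {n : ℕ} (x : Fin n → Bool) (P : Finset (Fin n) × Finset (Fin n)) :
    Finset (Fin (2 * n)) :=
  Finset.univ.filter (fun μ => (x (jj μ) = true ∧ ((jj μ ∈ P.1) ↔ (μ.1 % 2 = 0))) ∨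
    (x (jj μ) = false ∧ jj μ ∈ P.2))

lemma mem_backSet_d0 {n : ℕ} (x : Fin n → Bool) (P : Finset (Fin n) × Finset (Fin n))
    (j : Fin n) : d0 j ∈ backSet x P ↔ ((x j = true ∧ j ∈ P.1) ∨ (x j = false ∧ j ∈ P.2)) := by
  rw [backSet, Finset.mem_filter, jj_d0]
  have he : (d0 j).1 % 2 = 0 := d0_even j
  simp [he]

lemma mem_backSet_d1 {n : ℕ} (x : Fin n → Bool) (P : Finset (Fin n) × Finset (Fin n))
    (j : Fin n) : d1 j ∈ backSet x P ↔ ((x j = true ∧ j ∉ P.1) ∨ (x j = false ∧ j ∈ P.2)) := by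
  rw [backSet, Finset.mem_filter, jj_d1]
  have he : (d1 j).1 % 2 = 1 := d1_odd j
  simp [he]

lemma mS_backSet {n : ℕ} (x : Fin n → Bool) (P : Finset (Fin n) × Finset (Fin n)) :
    mS (backSet x P) = x := by
  funext j
  cases hxj : x j with
  | false =>
    have hf : mS (backSet x P) j = false := by
      rw [mS_false_iff, mem_backSet_d0, mem_backSet_d1]
      simp [hxj]
    rw [hf]
  | true =>
    have ht : mS (backSet x P) j = true := by
      rw [mS_true_iff, mem_backSet_d0, mem_backSet_d1]
      simp [hxj]
    rw [ht]

lemma fwdB_back {n : ℕ} (x : Fin n → Bool) (P : Finset (Fin n) × Finset (Fin n))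
    (hP1 : ∀ j ∈ P.1, x j = true) : fwdB x (backSet x P) = P.1 := by
  ext j
  rw [fwdB, Finset.mem_filter, mem_backSet_d0]
  constructor
  · rintro ⟨-, hxt, (⟨-, h⟩ | ⟨hf, -⟩)⟩
    · exact h
    · rw [hxt] at hf; exact absurd hf (by simp)
  · intro hj
    exact ⟨Finset.mem_univ _, hP1 j hj, Or.inl ⟨hP1 j hj, hj⟩⟩

lemma fwdD_back {n : ℕ} (x : Fin n → Bool) (P : Finset (Fin n) × Finset (Fin n))
    (hP2 : ∀ j ∈ P.2, x j = false) : fwdD x (backSet x P) = P.2 := by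
  ext j
  rw [fwdD, Finset.mem_filter, mem_backSet_d0]
  constructor
  · rintro ⟨-, hxf, (⟨ht, -⟩ | ⟨-, h⟩)⟩
    · rw [hxf] at ht; exact absurd ht (by simp)
    · exact h
  · intro hj
    exact ⟨Finset.mem_univ _, hP2 j hj, Or.inr ⟨hP2 j hj, hj⟩⟩

lemma even_d0 {n : ℕ} (μ : Fin (2 * n)) (hp : μ.1 % 2 = 0) : d0 (jj μ) = μ := by
  apply Fin.ext; simp only [d0, jj]; omega

lemma odd_d1 {n : ℕ} (μ : Fin (2 * n)) (hp : μ.1 % 2 = 1) : d1 (jj μ) = μ := by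
  apply Fin.ext; simp only [d1, jj]; omega

lemma back_fwd {n : ℕ} (x : Fin n → Bool) (S : Finset (Fin (2 * n))) (hSm : mS S = x) :
    backSet x (fwdB x S, fwdD x S) = S := by
  ext μ
  rw [backSet, Finset.mem_filter]
  have hm : mS S (jj μ) = x (jj μ) := by rw [hSm]
  by_cases hp : μ.1 % 2 = 0
  · have hd : d0 (jj μ) = μ := even_d0 μ hp
    cases hxj : x (jj μ) with
    | true =>
      constructor
      · rintro ⟨-, (⟨-, hiff⟩ | ⟨hff, -⟩)⟩
        · have h2 := hiff.mpr hp
          rw [fwdB, Finset.mem_filter, hd] at h2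
          exact h2.2.2
        · exact absurd hff (by simp)
      · intro hμS
        refine ⟨Finset.mem_univ _, Or.inl ⟨rfl, ?_⟩⟩
        constructor
        · intro _; exact hp
        · intro _
          rw [fwdB, Finset.mem_filter, hd]
          exact ⟨Finset.mem_univ _, hxj, hμS⟩
    | false =>
      constructor
      · rintro ⟨-, (⟨hff, -⟩ | ⟨-, hD⟩)⟩
        · exact absurd hff (by simp)
        · rw [fwdD, Finset.mem_filter, hd] at hD
          exact hD.2.2
      · intro hμS
        refine ⟨Finset.mem_univ _, Or.inr ⟨rfl, ?_⟩⟩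
        rw [fwdD, Finset.mem_filter, hd]
        exact ⟨Finset.mem_univ _, hxj, hμS⟩
  · have hp1 : μ.1 % 2 = 1 := by omega
    have hd : d1 (jj μ) = μ := odd_d1 μ hp1
    cases hxj : x (jj μ) with
    | true =>
      rw [hxj, mS_true_iff, hd] at hm
      constructor
      · rintro ⟨-, (⟨-, hiff⟩ | ⟨hff, -⟩)⟩
        · have hnot : jj μ ∉ fwdB x S := fun hc => hp (hiff.mp hc)
          rw [fwdB, Finset.mem_filter] at hnot
          by_contra hcμ
          exact hnot ⟨Finset.mem_univ _, hxj, hm.mpr hcμ⟩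
        · exact absurd hff (by simp)
      · intro hμS
        refine ⟨Finset.mem_univ _, Or.inl ⟨rfl, ?_⟩⟩
        constructor
        · intro hc
          rw [fwdB, Finset.mem_filter] at hc
          exact absurd hμS (hm.mp hc.2.2)
        · intro hc; exact absurd hc hp
    | false =>
      rw [hxj, mS_false_iff, hd] at hm
      constructor
      · rintro ⟨-, (⟨hff, -⟩ | ⟨-, hD⟩)⟩
        · exact absurd hff (by simp)
        · rw [fwdD, Finset.mem_filter] at hD
          exact hm.mp hD.2.2
      · intro hμS
        refine ⟨Finset.mem_univ _, Or.inr ⟨rfl, ?_⟩⟩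
        rw [fwdD, Finset.mem_filter]
        exact ⟨Finset.mem_univ _, hxj, hm.mpr hμS⟩

lemma key_card {n ζ : ℕ} (x : Fin n → Bool) (hx : hamming x = ζ)
    (S : Finset (Fin (2 * n))) (hS : mS S = x) :
    S.card = ζ + 2 * (fwdD x S).card := by
  rw [Finset.card_eq_sum_card_fiberwise (f := jj) (t := Finset.univ)
    (fun μ _ => Finset.mem_univ _)]
  rw [← Finset.sum_filter_add_sum_filter_not Finset.univ (fun j => x j = true)]
  have h1 : ∀ j ∈ Finset.univ.filter (fun j : Fin n => x j = true),
      (S.filter fun μ => jj μ = j).card = 1 := by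
    intro j hj
    have hxj : x j = true := (Finset.mem_filter.mp hj).2
    have hm : mS S j = true := by rw [hS]; exact hxj
    rw [mS_true_iff] at hm
    rw [fiber_card]
    by_cases h0 : d0 j ∈ S
    · rw [if_pos h0, if_neg (hm.mp h0)]
    · rw [if_neg h0, if_pos (by by_contra h1; exact h0 (hm.mpr h1))]
  have h2 : ∀ j ∈ Finset.univ.filter (fun j : Fin n => ¬ x j = true),
      (S.filter fun μ => jj μ = j).card = if d0 j ∈ S then 2 else 0 := by
    intro j hj
    have hxj : x j = false := by
      have := (Finset.mem_filter.mp hj).2; simpa using this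
    have hm : mS S j = false := by rw [hS]; exact hxj
    rw [mS_false_iff] at hm
    rw [fiber_card]
    by_cases h0 : d0 j ∈ S
    · rw [if_pos h0, if_pos (hm.mp h0), if_pos h0]
    · rw [if_neg h0, if_neg (fun h1 => h0 (hm.mpr h1)), if_neg h0]
  rw [Finset.sum_congr rfl h1, Finset.sum_congr rfl h2]
  rw [Finset.sum_const, smul_eq_mul, mul_one]
  have hX : (Finset.univ.filter (fun j : Fin n => x j = true)).card = ζ := hx
  rw [hX]
  congr 1
  rw [← Finset.sum_filter, Finset.sum_const, smul_eq_mul, Finset.filter_filter, mul_comm]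
  congr 1
  rw [fwdD]
  apply congrArg
  apply Finset.filter_congr
  intro j _
  simp

lemma card_S_eq {n : ℕ} (ζ l : ℕ) (hζeven : Even ζ) (hζ : ζ ≤ n) (x : Fin n → Bool)
    (hx : hamming x = ζ) :
    (Finset.univ.filter (fun S : Finset (Fin (2 * n)) => S.card = 2 * l ∧ mS S = x)).card =
      if ζ / 2 ≤ l ∧ l + ζ / 2 ≤ n then 2 ^ ζ * (n - ζ).choose (l - ζ / 2) else 0 := by
  obtain ⟨h, rfl⟩ : ∃ h, ζ = 2 * h := by
    obtain ⟨k, hk⟩ := hζeven; exact ⟨k, by omega⟩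
  have hhalf : 2 * h / 2 = h := by omega
  rw [hhalf]
  have hcardX : (Finset.univ.filter (fun j : Fin n => x j = true)).card = 2 * h := hx
  have hcardXc : (Finset.univ.filter (fun j : Fin n => x j = false)).card = n - 2 * h := by
    have hXc' : Finset.univ.filter (fun j : Fin n => x j = false)
        = Finset.univ.filter (fun j : Fin n => ¬ x j = true) := by
      apply Finset.filter_congr; intro j _; simp
    have hsplit := Finset.card_filter_add_card_filter_not
      (s := (Finset.univ : Finset (Fin n))) (p := fun j : Fin n => x j = true)
    have hcu : (Finset.univ : Finset (Fin n)).card = n := by simp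
    rw [hXc']
    omega
  have hfwdBsub : ∀ S : Finset (Fin (2 * n)),
      fwdB x S ⊆ Finset.univ.filter (fun j : Fin n => x j = true) := by
    intro S j hj
    rw [fwdB, Finset.mem_filter] at hj
    rw [Finset.mem_filter]
    exact ⟨Finset.mem_univ _, hj.2.1⟩
  have hfwdDsub : ∀ S : Finset (Fin (2 * n)),
      fwdD x S ⊆ Finset.univ.filter (fun j : Fin n => x j = false) := by
    intro S j hj
    rw [fwdD, Finset.mem_filter] at hj
    rw [Finset.mem_filter]
    exact ⟨Finset.mem_univ _, hj.2.1⟩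
  by_cases hrange : h ≤ l ∧ l + h ≤ n
  · rw [if_pos hrange]
    have hbij : (Finset.univ.filter
        (fun S : Finset (Fin (2 * n)) => S.card = 2 * l ∧ mS S = x)).card =
        (((Finset.univ.filter (fun j : Fin n => x j = true)).powerset) ×ˢ
         ((Finset.univ.filter (fun j : Fin n => x j = false)).powersetCard (l - h))).card := by
      apply Finset.card_bij' (i := fun S _ => (fwdB x S, fwdD x S))
        (j := fun P _ => backSet x P)
      -- hi
      · intro S hS
        rw [Finset.mem_filter] at hS
        obtain ⟨hSc, hSm⟩ := hS.2
        rw [Finset.mem_product]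
        dsimp only
        constructor
        · exact Finset.mem_powerset.mpr (hfwdBsub S)
        · rw [Finset.mem_powersetCard]
          refine ⟨hfwdDsub S, ?_⟩
          have hk := key_card x hx S hSm
          omega
      -- hj
      · intro P hP
        rw [Finset.mem_product, Finset.mem_powerset, Finset.mem_powersetCard] at hP
        have hP2X : ∀ j ∈ P.2, x j = false := by
          intro j hj
          have := hP.2.1 hj
          rw [Finset.mem_filter] at this
          exact this.2
        rw [Finset.mem_filter]
        refine ⟨Finset.mem_univ _, ?_, mS_backSet x P⟩
        have hk := key_card x hx _ (mS_backSet x P)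
        rw [fwdD_back x P hP2X] at hk
        have hc2 : P.2.card = l - h := hP.2.2
        omega
      -- left inverse
      · intro S hS
        rw [Finset.mem_filter] at hS
        exact back_fwd x S hS.2.2
      -- right inverse
      · intro P hP
        rw [Finset.mem_product, Finset.mem_powerset, Finset.mem_powersetCard] at hP
        have hP1X : ∀ j ∈ P.1, x j = true := by
          intro j hj
          have := hP.1 hj
          rw [Finset.mem_filter] at this
          exact this.2
        have hP2X : ∀ j ∈ P.2, x j = false := by
          intro j hj
          have := hP.2.1 hj
          rw [Finset.mem_filter] at this
          exact this.2
        rw [fwdB_back x P hP1X, fwdD_back x P hP2X]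
    rw [hbij, Finset.card_product, Finset.card_powerset, Finset.card_powersetCard,
      hcardX, hcardXc]
  · rw [if_neg hrange]
    rw [Finset.card_eq_zero, Finset.filter_eq_empty_iff]
    intro S _
    rintro ⟨hSc, hSm⟩
    have hk := key_card x hx S hSm
    have hle : (fwdD x S).card ≤ (Finset.univ.filter (fun j : Fin n => x j = false)).card :=
      Finset.card_le_card (hfwdDsub S)
    omega

def Zy {n : ℕ} (j0 : Fin n) (y : Fin n → Bool) : ℂ :=
  ∏ i : Fin n, if i.1 < j0.1 ∧ y i = true then (-1 : ℂ) else 1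

lemma fco_d0 {n : ℕ} (j0 : Fin n) (y : Fin n → Bool) : fco (d0 j0) y = Zy j0 y := by
  simp [fco, Zy, d0_half, d0_even]

lemma fco_d1 {n : ℕ} (j0 : Fin n) (y : Fin n → Bool) (hy : y j0 = true) :
    fco (d1 j0) y = Zy j0 y * (-Complex.I) := by
  simp [fco, Zy, d1_half, d1_odd, jj_d1, hy]

lemma Zy_sq {n : ℕ} (j0 : Fin n) (y : Fin n → Bool) : Zy j0 y * Zy j0 y = 1 := by
  rw [Zy, ← Finset.prod_mul_distrib]
  apply Finset.prod_eq_one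
  intro i _
  split_ifs <;> norm_num

lemma cancel_Z {P Q Z c : ℂ} (hZ : Z * Z = 1) (h : P * Z = Z * (c * Q)) : P = c * Q := by
  calc P = P * (Z * Z) := by rw [hZ, mul_one]
  _ = (P * Z) * Z := by ring
  _ = (Z * (c * Q)) * Z := by rw [h]
  _ = (c * Q) * (Z * Z) := by ring
  _ = c * Q := by rw [hZ, mul_one]

lemma mul_I_cancel {P Q : ℂ} (h : P * Complex.I = Q) : P = -Complex.I * Q := by
  linear_combination (-Complex.I) * h + P * Complex.I_mul_I

lemma mul_negI_cancel {P Q : ℂ} (h : P * (-Complex.I) = Q) : P = Complex.I * Q := by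
  linear_combination Complex.I * h + P * Complex.I_mul_I

lemma symmDiff_pair {n : ℕ} (S : Finset (Fin (2 * n))) (a b : Fin (2 * n)) (hab : a ≠ b)
    (ha : a ∈ S) (hb : b ∉ S) : symmDiff S ({a, b} : Finset (Fin (2 * n))) = insert b (S.erase a) := by
  ext μ
  by_cases h1 : μ = a
  · subst h1
    simp [Finset.mem_symmDiff, ha, hb, hab]
  · by_cases h2 : μ = b
    · subst h2
      simp [Finset.mem_symmDiff, hb, Ne.symm hab]
    · simp [Finset.mem_symmDiff, h1, h2]

lemma d_ne_d {n : ℕ} {j j0 : Fin n} (hj : j ≠ j0) :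
    d0 j ≠ d0 j0 ∧ d0 j ≠ d1 j0 ∧ d1 j ≠ d0 j0 ∧ d1 j ≠ d1 j0 := by
  have hv : j.1 ≠ j0.1 := fun hc => hj (Fin.ext hc)
  refine ⟨?_, ?_, ?_, ?_⟩ <;>
  · intro hc
    have h2 := congrArg Fin.val hc
    dsimp only [d0, d1] at h2
    omega

lemma mS_symmDiff_pair {n : ℕ} (S : Finset (Fin (2 * n))) (j0 : Fin n) :
    mS (symmDiff S ({d0 j0, d1 j0} : Finset (Fin (2 * n)))) = mS S := by
  funext j
  rw [mS, mS]
  congr 1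
  rw [fiber_card, fiber_card]
  by_cases hj : j = j0
  · subst hj
    have h0 : d0 j ∈ symmDiff S ({d0 j, d1 j} : Finset (Fin (2 * n))) ↔ d0 j ∉ S := by
      rw [Finset.mem_symmDiff]; simp [d0_ne_d1 j]
    have h1 : d1 j ∈ symmDiff S ({d0 j, d1 j} : Finset (Fin (2 * n))) ↔ d1 j ∉ S := by
      rw [Finset.mem_symmDiff]; simp
    by_cases p : d0 j ∈ S <;> by_cases q : d1 j ∈ S <;> simp [h0, h1, p, q]
  · obtain ⟨hn1, hn2, hn3, hn4⟩ := d_ne_d hj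
    have h0 : d0 j ∈ symmDiff S ({d0 j0, d1 j0} : Finset (Fin (2 * n))) ↔ d0 j ∈ S := by
      rw [Finset.mem_symmDiff]; simp [hn1, hn2]
    have h1 : d1 j ∈ symmDiff S ({d0 j0, d1 j0} : Finset (Fin (2 * n))) ↔ d1 j ∈ S := by
      rw [Finset.mem_symmDiff]; simp [hn3, hn4]
    simp [h0, h1]

lemma sum_invol_zero {n : ℕ} (c2 : ℕ) (m y : Fin n → Bool) (j0 : Fin n)
    (hy : y j0 = true) (hm : m j0 = true) :
    ∑ S ∈ Finset.univ.filter (fun S : Finset (Fin (2 * n)) => S.card = c2 ∧ mS S = m),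
      (starRingEnd ℂ) (ph S (z0 n)) * ph S y = 0 := by
  apply Finset.sum_involution
    (g := fun S _ => symmDiff S ({d0 j0, d1 j0} : Finset (Fin (2 * n))))
  -- f S + f (g S) = 0
  · intro S hS
    rw [Finset.mem_filter] at hS
    have hone : mS S j0 = true := by rw [hS.2.2]; exact hm
    rw [mS_true_iff] at hone
    by_cases h0 : d0 j0 ∈ S
    · have h1 : d1 j0 ∉ S := hone.mp h0
      have hb_not : d1 j0 ∉ S.erase (d0 j0) := fun hc => h1 (Finset.mem_of_mem_erase hc)
      have hpair := symmDiff_pair S (d0 j0) (d1 j0) (d0_ne_d1 j0) h0 h1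
      have hrel : ∀ w : Fin n → Bool,
          ph (symmDiff S ({d0 j0, d1 j0} : Finset (Fin (2 * n)))) w * fco (d0 j0) w
            = fco (d1 j0) w * ph S w := by
        intro w
        rw [hpair, ph, ph, Finset.prod_insert hb_not, mul_assoc,
          Finset.prod_erase_mul S _ h0]
      have hz := hrel (z0 n)
      simp only [fco_z0, d0_even j0, d1_odd j0] at hz
      norm_num at hz
      have hyrel := hrel y
      rw [fco_d0, fco_d1 _ _ hy] at hyrel
      have h5 : ph (symmDiff S ({d0 j0, d1 j0} : Finset (Fin (2 * n)))) y
          = -Complex.I * ph S y :=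
        cancel_Z (Zy_sq j0 y) (by linear_combination hyrel)
      have hzc : (starRingEnd ℂ) (ph (symmDiff S ({d0 j0, d1 j0} : Finset (Fin (2 * n)))) (z0 n))
          = -Complex.I * (starRingEnd ℂ) (ph S (z0 n)) := by
        rw [hz, _root_.map_mul, Complex.conj_I]
      rw [hzc, h5]
      linear_combination ((starRingEnd ℂ) (ph S (z0 n)) * ph S y) * Complex.I_mul_I
    · have h1 : d1 j0 ∈ S := by
        by_contra hc
        exact h0 (hone.mpr hc)
      have hb_not : d0 j0 ∉ S.erase (d1 j0) := fun hc => h0 (Finset.mem_of_mem_erase hc)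
      have hpair : symmDiff S ({d0 j0, d1 j0} : Finset (Fin (2 * n)))
          = insert (d0 j0) (S.erase (d1 j0)) := by
        rw [Finset.pair_comm]
        exact symmDiff_pair S (d1 j0) (d0 j0) (Ne.symm (d0_ne_d1 j0)) h1 h0
      have hrel : ∀ w : Fin n → Bool,
          ph (symmDiff S ({d0 j0, d1 j0} : Finset (Fin (2 * n)))) w * fco (d1 j0) w
            = fco (d0 j0) w * ph S w := by
        intro w
        rw [hpair, ph, ph, Finset.prod_insert hb_not, mul_assoc,
          Finset.prod_erase_mul S _ h1]
      have hz := hrel (z0 n)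
      simp only [fco_z0, d0_even j0, d1_odd j0] at hz
      norm_num at hz
      have hz' := mul_I_cancel hz
      have hyrel := hrel y
      rw [fco_d0, fco_d1 _ _ hy] at hyrel
      have h5' : (ph (symmDiff S ({d0 j0, d1 j0} : Finset (Fin (2 * n)))) y) * (-Complex.I)
          = 1 * ph S y :=
        cancel_Z (Zy_sq j0 y) (by linear_combination hyrel)
      rw [one_mul] at h5'
      have h5 := mul_negI_cancel h5'
      have hzc : (starRingEnd ℂ) (ph (symmDiff S ({d0 j0, d1 j0} : Finset (Fin (2 * n)))) (z0 n))
          = Complex.I * (starRingEnd ℂ) (ph S (z0 n)) := by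
        rw [hz', _root_.map_mul, map_neg, Complex.conj_I]
        ring
      rw [hzc, h5]
      linear_combination ((starRingEnd ℂ) (ph S (z0 n)) * ph S y) * Complex.I_mul_I
  -- g S ≠ S
  · intro S hS _
    intro hc
    have hmem : d0 j0 ∈ symmDiff S ({d0 j0, d1 j0} : Finset (Fin (2 * n))) ↔ d0 j0 ∉ S := by
      rw [Finset.mem_symmDiff]; simp [d0_ne_d1 j0]
    rw [hc] at hmem
    by_cases h0 : d0 j0 ∈ S
    · exact (hmem.mp h0) h0
    · exact h0 (hmem.mpr h0)
  -- g maps into the set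
  · intro S hS
    rw [Finset.mem_filter] at hS ⊢
    have hone : mS S j0 = true := by rw [hS.2.2]; exact hm
    rw [mS_true_iff] at hone
    refine ⟨Finset.mem_univ _, ?_, by rw [mS_symmDiff_pair, hS.2.2]⟩
    have hcpos : 1 ≤ S.card := by
      by_cases h0 : d0 j0 ∈ S
      · exact Finset.card_pos.mpr ⟨_, h0⟩
      · exact Finset.card_pos.mpr ⟨_, by by_contra hc; exact h0 (hone.mpr hc)⟩
    by_cases h0 : d0 j0 ∈ S
    · have h1 : d1 j0 ∉ S := hone.mp h0
      rw [symmDiff_pair S (d0 j0) (d1 j0) (d0_ne_d1 j0) h0 h1]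
      rw [Finset.card_insert_of_notMem (fun hc => h1 (Finset.mem_of_mem_erase hc)),
        Finset.card_erase_of_mem h0]
      have := hS.2.1
      omega
    · have h1 : d1 j0 ∈ S := by by_contra hc; exact h0 (hone.mpr hc)
      rw [Finset.pair_comm,
        symmDiff_pair S (d1 j0) (d0 j0) (Ne.symm (d0_ne_d1 j0)) h1 h0]
      rw [Finset.card_insert_of_notMem (fun hc => h0 (Finset.mem_of_mem_erase hc)),
        Finset.card_erase_of_mem h1]
      have := hS.2.1
      omega
  -- g ∘ g = id
  · intro S hS
    exact symmDiff_symmDiff_cancel_right ({d0 j0, d1 j0} : Finset (Fin (2 * n))) S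

lemma sum_bcoef (n ζ : ℕ) (hζn : ζ ≤ n) (hζeven : Even ζ) :
    ∑ l ∈ Finset.range (n + 1), bcoef n ζ l = 1 := by
  obtain ⟨h, rfl⟩ : ∃ h, ζ = 2 * h := by
    obtain ⟨k, hk⟩ := hζeven; exact ⟨k, by omega⟩
  have hhalf : 2 * h / 2 = h := by omega
  have hb : ∀ l, bcoef n (2 * h) l = if h ≤ l ∧ l + h ≤ n then
      (2 : ℂ) ^ (2 * h) / 2 ^ n * ((n - 2 * h).choose (l - h)) else 0 := by
    intro l; rw [bcoef, hhalf]
  rw [Finset.sum_congr rfl (fun l _ => hb l)]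
  rw [← Finset.sum_filter]
  have hre : ∑ l ∈ (Finset.range (n + 1)).filter (fun l => h ≤ l ∧ l + h ≤ n),
      ((2 : ℂ) ^ (2 * h) / 2 ^ n * ((n - 2 * h).choose (l - h)))
      = ∑ d ∈ Finset.range (n - 2 * h + 1),
        ((2 : ℂ) ^ (2 * h) / 2 ^ n * ((n - 2 * h).choose d)) := by
    refine Finset.sum_bij' (fun l _ => l - h) (fun d _ => d + h) ?_ ?_ ?_ ?_ ?_
    · intro l hl
      rw [Finset.mem_filter, Finset.mem_range] at hl
      rw [Finset.mem_range]
      omega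
    · intro d hd
      rw [Finset.mem_range] at hd
      rw [Finset.mem_filter, Finset.mem_range]
      omega
    · intro l hl
      rw [Finset.mem_filter] at hl
      omega
    · intro d hd
      rw [Finset.mem_range] at hd
      omega
    · intro l hl
      rfl
  rw [hre, ← Finset.mul_sum]
  have hcast : ∑ d ∈ Finset.range (n - 2 * h + 1), ((n - 2 * h).choose d : ℂ)
      = (2 : ℂ) ^ (n - 2 * h) := by
    rw [← Nat.cast_sum]
    rw [Nat.sum_range_choose]
    push_cast
    ring
  rw [hcast]
  rw [div_mul_eq_mul_div, ← pow_add]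
  have : 2 * h + (n - 2 * h) = n := by omega
  rw [this]
  apply div_self
  exact pow_ne_zero _ two_ne_zero

/-- `|φ⟩⟨0…0|` (for `|φ⟩` supported on Hamming weight `ζ`) is an
eigen-operator of `Π_{2l}` after projection onto the `{0,ζ}` subspace, with
eigenvalues `b_{2l}` summing to 1. -/
theorem eigen_operator_property (n ζ : ℕ) (hn : 1 ≤ n) (hζ0 : 0 < ζ) (hζn : ζ ≤ n)
    (hζeven : Even ζ) (φ : QState n)
    (hφ : ∀ b : Fin n → Bool, φ b ≠ 0 → hamming b = ζ) :
    (∀ l : ℕ, l ≤ n →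
      projZeroZeta n ζ * PiEven n l (outer φ (ket0 n)) * projZeroZeta n ζ
        = bcoef n ζ l • outer φ (ket0 n))
    ∧ ∑ l ∈ Finset.range (n + 1), bcoef n ζ l = 1 := by
  have hφ0 : φ (z0 n) = 0 := by
    by_contra hc
    have hham := hφ _ hc
    have : hamming (z0 n) = 0 := by simp [hamming, z0]
    omega
  refine ⟨?_, sum_bcoef n ζ hζn hζeven⟩
  intro l hl
  ext x y
  have hL : (projZeroZeta n ζ * PiEven n l (outer φ (ket0 n)) * projZeroZeta n ζ) x y
      = (if x = (fun _ => false) ∨ hamming x = ζ then (1 : ℂ) else 0) *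
        (PiEven n l (outer φ (ket0 n)) x y) *
        (if y = (fun _ => false) ∨ hamming y = ζ then (1 : ℂ) else 0) := by
    rw [projZeroZeta, Matrix.mul_diagonal, Matrix.diagonal_mul]
  have hPi : PiEven n l (outer φ (ket0 n)) x y
      = ((2 : ℂ) ^ n)⁻¹ *
        ∑ S ∈ Finset.univ.filter (fun S : Finset (Fin (2 * n)) => S.card = 2 * l),
          ((starRingEnd ℂ) (ph S (z0 n)) * φ (mS S)) *
          (if x = bx y (mS S) then ph S y else 0) := by
    rw [PiEven, Matrix.smul_apply, Matrix.sum_apply, smul_eq_mul]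
    congr 1
    apply Finset.sum_congr rfl
    intro S _
    rw [Matrix.smul_apply, smul_eq_mul, trace_gammaS, gammaS_apply]
  have hR : (bcoef n ζ l • outer φ (ket0 n)) x y
      = bcoef n ζ l * (φ x * (starRingEnd ℂ) (if y = (fun _ => false) then (1 : ℂ) else 0)) := by
    rw [Matrix.smul_apply, smul_eq_mul, outer, Matrix.of_apply, ket0, ket]
  rw [hL, hPi, hR]
  by_cases hy : y = (fun _ => false)
  · -- column y = |0...0>
    rw [if_pos hy, _root_.map_one, mul_one, if_pos (Or.inl hy), mul_one]
    have hterm : ∀ S : Finset (Fin (2 * n)),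
        ((starRingEnd ℂ) (ph S (z0 n)) * φ (mS S)) *
          (if x = bx y (mS S) then ph S y else 0)
        = if mS S = x then φ x else 0 := by
      intro S
      have hby : bx y (mS S) = mS S := by rw [hy]; exact bx_z0 (mS S)
      have hphy : ph S y = ph S (z0 n) := by rw [hy]; rfl
      rw [hby, hphy]
      by_cases hx : mS S = x
      · rw [if_pos hx.symm, if_pos hx, hx]
        linear_combination (φ x) * conj_ph_z0_mul S
      · rw [if_neg (fun hc => hx hc.symm), if_neg hx, mul_zero]
    rw [Finset.sum_congr rfl (fun S _ => hterm S)]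
    rw [← Finset.sum_filter, Finset.filter_filter, Finset.sum_const, nsmul_eq_mul]
    by_cases hφx : φ x = 0
    · rw [hφx]
      simp
    · have hxham : hamming x = ζ := hφ x hφx
      rw [if_pos (Or.inr hxham), one_mul]
      rw [card_S_eq ζ l hζeven hζn x hxham]
      rw [bcoef]
      by_cases hcond : ζ / 2 ≤ l ∧ l + ζ / 2 ≤ n
      · rw [if_pos hcond, if_pos hcond]
        push_cast
        try ring
      · rw [if_neg hcond, if_neg hcond]
        simp
  · -- column y ≠ |0...0> : both sides vanish
    rw [if_neg hy, map_zero, mul_zero, mul_zero]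
    by_cases hdy : hamming y = ζ
    case neg =>
      rw [if_neg (not_or_intro hy hdy), mul_zero]
    rw [if_pos (Or.inr hdy), mul_one]
    by_cases hdx : x = (fun _ => false) ∨ hamming x = ζ
    case neg =>
      rw [if_neg hdx, zero_mul]
    rw [if_pos hdx, one_mul]
    have hcond : ∀ S : Finset (Fin (2 * n)), (x = bx y (mS S)) ↔ (mS S = bx x y) := by
      intro S
      constructor <;> intro hh <;> funext j <;> have hj := congrFun hh j <;>
        rw [bx] at * <;>
        · revert hj
          cases x j <;> cases y j <;> cases mS S j <;> simp [bx]
    have hterm : ∀ S : Finset (Fin (2 * n)),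
        ((starRingEnd ℂ) (ph S (z0 n)) * φ (mS S)) *
          (if x = bx y (mS S) then ph S y else 0)
        = if mS S = bx x y then
            φ (bx x y) * ((starRingEnd ℂ) (ph S (z0 n)) * ph S y) else 0 := by
      intro S
      by_cases hmm : mS S = bx x y
      · rw [if_pos ((hcond S).mpr hmm), if_pos hmm, hmm]
        ring
      · rw [if_neg (fun hc => hmm ((hcond S).mp hc)), if_neg hmm, mul_zero]
    rw [Finset.sum_congr rfl (fun S _ => hterm S)]
    rw [← Finset.sum_filter, Finset.filter_filter, ← Finset.mul_sum]
    by_cases hφm : φ (bx x y) = 0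
    · rw [hφm]
      simp
    have hmham : hamming (bx x y) = ζ := hφ _ hφm
    have hexists : ∃ j0 : Fin n, y j0 = true ∧ bx x y j0 = true := by
      rcases hdx with hx0 | hxz
      · have hyn : ∃ j0, y j0 = true := by
          by_contra hc
          push_neg at hc
          apply hy
          funext j
          have := hc j
          cases hyy : y j
          · rfl
          · exact absurd hyy this
        obtain ⟨j0, hj0⟩ := hyn
        refine ⟨j0, hj0, ?_⟩
        have hx0j : x j0 = false := by rw [hx0]
        rw [bx, hx0j, hj0]
        rfl
      · by_contra hc
        push_neg at hc
        have hxy : x = y := by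
          have hsub : Finset.univ.filter (fun j => y j = true) ⊆
              Finset.univ.filter (fun j => x j = true) := by
            intro j hj
            rw [Finset.mem_filter] at hj ⊢
            refine ⟨Finset.mem_univ _, ?_⟩
            have h2 := hc j hj.2
            rw [bx] at h2
            revert h2
            rw [hj.2]
            cases x j <;> simp
          have hcards : (Finset.univ.filter (fun j => x j = true)).card ≤
              (Finset.univ.filter (fun j => y j = true)).card := by
            have hxc : (Finset.univ.filter (fun j => x j = true)).card = ζ := hxz
            have hyc : (Finset.univ.filter (fun j => y j = true)).card = ζ := hdy
            omega
          have heq := Finset.eq_of_subset_of_card_le hsub hcards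
          funext j
          have : (j ∈ Finset.univ.filter (fun j => y j = true)) ↔
              (j ∈ Finset.univ.filter (fun j => x j = true)) := by rw [heq]
          rw [Finset.mem_filter, Finset.mem_filter] at this
          cases hxj : x j <;> cases hyj : y j <;> simp_all
        apply hφm
        have : bx x y = z0 n := by
          rw [hxy]
          funext j
          simp [bx, z0]
        rw [this]
        exact hφ0
    obtain ⟨j0, hyj0, hmj0⟩ := hexists
    rw [sum_invol_zero (2 * l) (bx x y) y j0 hyj0 hmj0]
    simp

end QCQMC
end
end

section
/- Let n ≥ 1 and let ζ be an even integer with 0 < ζ ≤ n. Let |i⟩ be a computational basis state of ℂ^{2^n} with Hamming weight exactly ζ. If 2l > 2n − ζ then Π_{2l}(|i⟩⟨0…0|) = 0; in fact every term vanishes: ⟨0…0| γ_S† |i⟩ = 0 for all S ⊆ [2n] with |S| = 2l. -/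
open Matrix Finset

noncomputable section

namespace QCQMC

/-- Nonzero entries of a Majorana operator force the bit pattern. -/
lemma maj_entry_ne_zero {n : ℕ} {μ : Fin (2*n)} {b c : Fin n → Bool}
    (h : majorana n μ b c ≠ 0) :
    (b ⟨μ.1 / 2, by have := μ.2; omega⟩ ≠ c ⟨μ.1 / 2, by have := μ.2; omega⟩) ∧
      (∀ i : Fin n, i.1 ≠ μ.1 / 2 → b i = c i) := by
  by_contra hc
  apply h
  simp only [majorana, Matrix.of_apply, dif_neg hc]

/-- A product of Majorana operators has a nonzero `(b, b')` entry only if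
`b` and `b'` differ at qubit `j` exactly when the list hits qubit `j` an odd number
of times. -/
lemma prod_entry {n : ℕ} (L : List (Fin (2*n))) (b b' : Fin n → Bool)
    (h : ((L.map (majorana n)).prod) b b' ≠ 0) (j : Fin n) :
    (b j ≠ b' j) ↔ Odd ((L.filter (fun μ => μ.1/2 = j.1)).length) := by
  induction L generalizing b with
  | nil =>
    simp only [List.map_nil, List.prod_nil] at h
    have : b = b' := by
      by_contra hne
      exact h (by simp [Matrix.one_apply, hne])
    subst this
    simp
  | cons μ L ih =>
    simp only [List.map_cons, List.prod_cons, Matrix.mul_apply] at h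
    obtain ⟨c, -, hc⟩ := Finset.exists_ne_zero_of_sum_ne_zero h
    have h1 : majorana n μ b c ≠ 0 := fun h0 => hc (by simp [h0])
    have h2 : ((L.map (majorana n)).prod) c b' ≠ 0 := fun h0 => hc (by simp [h0])
    obtain ⟨hdiff, hsame⟩ := maj_entry_ne_zero h1
    have ihc := ih c h2
    by_cases hj : j.1 = μ.1 / 2
    · have : (⟨μ.1/2, by have := μ.2; omega⟩ : Fin n) = j := Fin.ext hj.symm
      rw [this] at hdiff
      have : (L.filter (fun μ' => μ'.1/2 = j.1)).length + 1
          = ((μ :: L).filter (fun μ' => μ'.1/2 = j.1)).length := by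
        simp [List.filter_cons, hj.symm]
      rw [← this, Nat.odd_add_one, ← ihc]
      cases hb : b j <;> cases hb' : b' j <;> cases hcj : c j <;> simp_all
    · have : ((μ :: L).filter (fun μ' => μ'.1/2 = j.1)).length
          = (L.filter (fun μ' => μ'.1/2 = j.1)).length := by
        have : ¬ (μ.1/2 = j.1) := by omega
        simp [List.filter_cons, this]
      rw [this, ← ihc, hsame j (by omega)]

lemma length_sort_filter {α} [LinearOrder α] (S : Finset α) (q : α → Bool) :
    ((S.sort (· ≤ ·)).filter q).length = (S.filter (fun a => q a = true)).card := by
  have h : (S.sort (· ≤ ·)).filter q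
      = (S.sort (· ≤ ·)).filter (fun a => decide (q a = true)) := by
    apply List.filter_congr; intro a _; cases q a <;> simp
  rw [h, ← Multiset.coe_card, ← Multiset.filter_coe, Finset.sort_eq]
  rfl

lemma fiber_card_le_two (n : ℕ) (j : Fin n) (S : Finset (Fin (2*n))) :
    (S.filter (fun μ : Fin (2*n) => μ.1/2 = j.1)).card ≤ 2 := by
  have hj1 : 2 * j.1 < 2 * n := by have := j.2; omega
  have hj2 : 2 * j.1 + 1 < 2 * n := by have := j.2; omega
  have hsub : (S.filter (fun μ : Fin (2*n) => μ.1/2 = j.1))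
      ⊆ {⟨2*j.1, hj1⟩, ⟨2*j.1+1, hj2⟩} := by
    intro μ hμ
    have h := (Finset.mem_filter.mp hμ).2
    simp only [Finset.mem_insert, Finset.mem_singleton]
    rcases Nat.lt_or_ge (μ.1) (2*j.1+1) with h'|h'
    · left; exact Fin.ext (show μ.1 = 2*j.1 by omega)
    · right; exact Fin.ext (show μ.1 = 2*j.1+1 by omega)
  calc _ ≤ ({⟨2*j.1, hj1⟩, ⟨2*j.1+1, hj2⟩} : Finset (Fin (2*n))).card :=
        Finset.card_le_card hsub
    _ ≤ 2 := (Finset.card_insert_le _ _).trans (by simp)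

lemma trace_mul_outer_ket {n : ℕ} (M : QOp n) (u v : Fin n → Bool) :
    Matrix.trace (M * outer (ket n u) (ket n v)) = M v u := by
  simp [Matrix.trace, Matrix.diag, Matrix.mul_apply, outer, ket, mul_ite, ite_mul,
    apply_ite (starRingEnd ℂ), Finset.sum_ite_eq, Finset.sum_ite_eq']

/-- if `2l > 2n - ζ` then every term `⟨0…0|γ_S†|i⟩` vanishes and
`Π_{2l}(|i⟩⟨0…0|) = 0`. -/
theorem high_sector_vanishes (n ζ l : ℕ) (hn : 1 ≤ n) (hζ0 : 0 < ζ) (hζn : ζ ≤ n)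
    (hζeven : Even ζ) (hln : l ≤ n) (i : Fin n → Bool) (hi : hamming i = ζ)
    (hl : 2 * n - ζ < 2 * l) :
    (∀ S : Finset (Fin (2 * n)), S.card = 2 * l →
      (gammaS n S)ᴴ (fun _ => false) i = 0)
    ∧ PiEven n l (outer (ket n i) (ket0 n)) = 0 := by
  have key : ∀ S : Finset (Fin (2 * n)), S.card = 2 * l →
      (gammaS n S)ᴴ (fun _ => false) i = 0 := by
    intro S hS
    by_contra hne
    have hg : ((S.sort (· ≤ ·)).map (majorana n)).prod i (fun _ => false) ≠ 0 := by
      intro h0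
      apply hne
      rw [Matrix.conjTranspose_apply]
      show star (gammaS n S i (fun _ => false)) = 0
      rw [show gammaS n S i (fun _ => false)
          = ((S.sort (· ≤ ·)).map (majorana n)).prod i (fun _ => false) from rfl, h0]
      simp
    have hodd := prod_entry (S.sort (· ≤ ·)) i (fun _ => false) hg
    have hcard : ∀ j : Fin n,
        (((S.sort (· ≤ ·)).filter (fun μ : Fin (2*n) => μ.1/2 = j.1)).length)
          = (S.filter (fun μ : Fin (2*n) => μ.1/2 = j.1)).card := by
      intro j
      rw [length_sort_filter S (fun μ : Fin (2*n) => decide (μ.1/2 = j.1))]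
      congr 1
      ext μ
      simp
    have hone : ∀ j : Fin n,
        (S.filter (fun μ : Fin (2*n) => μ.1/2 = j.1)).card
          + (if i j = true then 1 else 0) ≤ 2 := by
      intro j
      have hle := fiber_card_le_two n j S
      by_cases hij : i j = true
      · have hOdd : Odd ((S.filter (fun μ : Fin (2*n) => μ.1/2 = j.1)).card) := by
          rw [← hcard j]
          exact (hodd j).mp (by simp [hij])
        obtain ⟨k, hk⟩ := hOdd
        simp only [hij, if_pos]
        omega
      · simp only [hij, if_neg, Nat.add_zero]
        simpa using hle
    have hsum : S.card
        = ∑ j : Fin n, (S.filter (fun μ : Fin (2*n) => μ.1/2 = j.1)).card := by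
      rw [Finset.card_eq_sum_card_fiberwise
        (f := fun μ : Fin (2*n) => (⟨μ.1/2, by have := μ.2; omega⟩ : Fin n))
        (t := Finset.univ) (fun _ _ => Finset.mem_univ _)]
      apply Finset.sum_congr rfl
      intro j _
      congr 1
      apply Finset.filter_congr
      intro μ _
      constructor
      · intro h; rw [← h]
      · intro h; exact Fin.ext h
    have hham : ∑ j : Fin n, (if i j = true then 1 else 0) = ζ := by
      rw [← hi, hamming, Finset.card_filter]
    have htot : ∑ j : Fin n,
        ((S.filter (fun μ : Fin (2*n) => μ.1/2 = j.1)).card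
          + (if i j = true then 1 else 0)) ≤ ∑ _j : Fin n, 2 :=
      Finset.sum_le_sum (fun j _ => hone j)
    rw [Finset.sum_add_distrib, ← hsum, hS, hham] at htot
    simp only [Finset.sum_const, Finset.card_univ, Fintype.card_fin, smul_eq_mul] at htot
    omega
  refine ⟨key, ?_⟩
  rw [PiEven]
  rw [Finset.sum_eq_zero, smul_zero]
  intro S hS
  have hS' : S.card = 2 * l := (Finset.mem_filter.mp hS).2
  have htr : Matrix.trace ((gammaS n S)ᴴ * outer (ket n i) (ket0 n)) = 0 := by
    rw [show ket0 n = ket n (fun _ => false) from rfl, trace_mul_outer_ket]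
    exact key S hS'
  rw [htr, zero_smul]

end QCQMC

end
end

section
/- Let n ≥ 1 and 0 ≤ l ≤ n. Then Σ_{b∈{0,1}^n} Σ_{S⊆[2n], |S|=2l} |tr(γ_S |b⟩⟨b|)|² = 2^n · binom(n, l). Equivalently, the eigenvalue of the Matchgate shadow measurement channel on the 2l-th even Majorana subspace, f_{2l} := binom(2n, 2l)^{−1} · 2^{−n} Σ_{b∈{0,1}^n} Σ_{S⊆[2n], |S|=2l} |tr(γ_S |b⟩⟨b|)|², equals binom(2n, 2l)^{−1} · binom(n, l). -/
open Matrix Finset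

noncomputable section

namespace QCQMC

/-! ### Auxiliary development -/

/-- The qubit index affected by Majorana operator `μ`. -/
abbrev qidx (n : ℕ) (μ : Fin (2*n)) : Fin n := ⟨μ.1/2, by have := μ.2; omega⟩

/-- Bit flip at the qubit index of `μ`. -/
def bflip (n : ℕ) (μ : Fin (2*n)) (b : Fin n → Bool) : Fin n → Bool :=
  Function.update b (qidx n μ) (! b (qidx n μ))

lemma maj_cond_iff (n : ℕ) (μ : Fin (2*n)) (b b' : Fin n → Bool) :
    ((b (qidx n μ) ≠ b' (qidx n μ)) ∧ (∀ i : Fin n, i.1 ≠ μ.1 / 2 → b i = b' i))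
      ↔ b' = bflip n μ b := by
  constructor
  · rintro ⟨h1, h2⟩
    funext i
    by_cases hi : i = qidx n μ
    · subst hi
      simp only [bflip, Function.update_self]
      revert h1
      cases hb : b (qidx n μ) <;> cases hb' : b' (qidx n μ) <;> simp
    · rw [bflip, Function.update_of_ne hi]
      exact (h2 i (fun h => hi (Fin.ext h))).symm
  · rintro rfl
    constructor
    · simp only [bflip, Function.update_self]
      cases b (qidx n μ) <;> simp
    · intro i hi
      rw [bflip, Function.update_of_ne (fun h => hi (congrArg Fin.val h))]

lemma majorana_eq_zero (n : ℕ) (μ : Fin (2*n)) (b b' : Fin n → Bool)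
    (h : b' ≠ bflip n μ b) : majorana n μ b b' = 0 := by
  rw [majorana, Matrix.of_apply, dif_neg]
  rw [show (⟨μ.1 / 2, by have := μ.2; omega⟩ : Fin n) = qidx n μ from rfl, maj_cond_iff]
  exact h

lemma abs_majorana_flip (n : ℕ) (μ : Fin (2*n)) (b : Fin n → Bool) :
    ‖majorana n μ b (bflip n μ b)‖ = 1 := by
  rw [majorana, Matrix.of_apply, dif_pos ((maj_cond_iff n μ b _).mpr rfl)]
  rw [norm_mul]
  have h1 : ‖∏ i : Fin n, if i.1 < μ.1 / 2 ∧ b i = true then (-1 : ℂ) else 1‖ = 1 := by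
    rw [norm_prod]
    rw [Finset.prod_eq_one]
    intro i _
    split_ifs <;> simp
  rw [h1, one_mul]
  split_ifs <;> simp

/-- Number of occurrences in `L` of Majorana indices acting on qubit `i`. -/
def fcount {n : ℕ} (L : List (Fin (2*n))) (i : Fin n) : ℕ := L.countP (fun μ => μ.1/2 == i.1)

/-- The net bit-flip action of a list of Majorana operators. -/
def flipL (n : ℕ) (L : List (Fin (2*n))) (b : Fin n → Bool) : Fin n → Bool :=
  fun i => xor (b i) (fcount L i).bodd

lemma flipL_nil {n : ℕ} (b : Fin n → Bool) : flipL n [] b = b := by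
  funext i; simp [flipL, fcount]

lemma flipL_cons {n : ℕ} (μ : Fin (2*n)) (L : List (Fin (2*n))) (b : Fin n → Bool) :
    flipL n (μ :: L) b = flipL n L (bflip n μ b) := by
  funext i
  simp only [flipL, fcount, List.countP_cons]
  by_cases hi : μ.1 / 2 = i.1
  · have hq : qidx n μ = i := Fin.ext hi
    rw [if_pos (by simpa using hi)]
    rw [bflip, hq, Function.update_self]
    rw [Nat.bodd_add]
    cases b i <;> cases (List.countP (fun μ => μ.1/2 == i.1) L).bodd <;> rfl
  · rw [if_neg (by simpa using hi)]
    rw [bflip, Function.update_of_ne (fun h => hi (by rw [h]))]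
    simp

lemma abs_prod_apply {n : ℕ} (L : List (Fin (2*n))) (b b' : Fin n → Bool) :
    ‖((L.map (majorana n)).prod) b b'‖ = if b' = flipL n L b then 1 else 0 := by
  induction L generalizing b with
  | nil =>
    rw [flipL_nil]
    simp only [List.map_nil, List.prod_nil, Matrix.one_apply]
    by_cases h : b' = b
    · subst h; simp
    · rw [if_neg (fun h' => h h'.symm), if_neg h, norm_zero]
  | cons μ L ih =>
    rw [List.map_cons, List.prod_cons, flipL_cons]
    rw [Matrix.mul_apply]
    rw [Finset.sum_eq_single (bflip n μ b)]
    · rw [norm_mul, abs_majorana_flip, one_mul, ih]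
    · intro c _ hc
      rw [majorana_eq_zero n μ b c hc, zero_mul]
    · intro h; exact absurd (Finset.mem_univ _) h

/-- The even Majorana index `2i` acting on qubit `i`. -/
def e0 (n : ℕ) (i : Fin n) : Fin (2*n) := ⟨2*i.1, by have := i.2; omega⟩
/-- The odd Majorana index `2i+1` acting on qubit `i`. -/
def e1 (n : ℕ) (i : Fin n) : Fin (2*n) := ⟨2*i.1+1, by have := i.2; omega⟩

/-- A set of Majorana indices is *paired* if for each qubit it contains either both or
neither of the two indices acting on it. -/
def paired (n : ℕ) (S : Finset (Fin (2*n))) : Prop := ∀ i : Fin n, (e0 n i ∈ S ↔ e1 n i ∈ S)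

instance {n : ℕ} : DecidablePred (paired n) := fun S => by unfold paired; infer_instance

lemma fcount_sort {n : ℕ} (S : Finset (Fin (2*n))) (i : Fin n) :
    fcount (S.sort (· ≤ ·)) i = (S.filter (fun μ => μ.1/2 = i.1)).card := by
  have h1 : fcount (S.sort (· ≤ ·)) i
      = Multiset.countP (fun μ : Fin (2*n) => μ.1/2 = i.1) S.val := by
    rw [← Finset.sort_eq (s := S) (r := (· ≤ ·))]
    rw [fcount]
    rw [Multiset.coe_countP]
    congr 1
  rw [h1, Multiset.countP_eq_card_filter]
  rfl

lemma filter_halve {n : ℕ} (S : Finset (Fin (2*n))) (i : Fin n) :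
    S.filter (fun μ => μ.1/2 = i.1) = S ∩ {e0 n i, e1 n i} := by
  ext μ
  simp only [Finset.mem_filter, Finset.mem_inter, Finset.mem_insert, Finset.mem_singleton]
  constructor
  · rintro ⟨hμ, h⟩
    refine ⟨hμ, ?_⟩
    rcases Nat.even_or_odd μ.1 with ⟨k, hk⟩ | ⟨k, hk⟩
    · left; apply Fin.ext; simp [e0]; omega
    · right; apply Fin.ext; simp [e1]; omega
  · rintro ⟨hμ, h | h⟩ <;> subst h <;> refine ⟨hμ, ?_⟩ <;> simp [e0, e1] <;> omega

set_option linter.unnecessarySeqFocus false in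
lemma bodd_fcount_sort {n : ℕ} (S : Finset (Fin (2*n))) (i : Fin n) :
    (fcount (S.sort (· ≤ ·)) i).bodd = false ↔ (e0 n i ∈ S ↔ e1 n i ∈ S) := by
  rw [fcount_sort, filter_halve]
  have hne : e0 n i ≠ e1 n i := by intro h; have := congrArg Fin.val h; simp [e0, e1] at this
  by_cases h0 : e0 n i ∈ S <;> by_cases h1 : e1 n i ∈ S
  · have : S ∩ {e0 n i, e1 n i} = {e0 n i, e1 n i} := by
      apply Finset.inter_eq_right.mpr; intro x hx
      simp only [Finset.mem_insert, Finset.mem_singleton] at hx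
      rcases hx with rfl | rfl <;> assumption
    rw [this, Finset.card_insert_of_notMem (by simpa using hne), Finset.card_singleton]
    simp [h0, h1]
  · have : S ∩ {e0 n i, e1 n i} = {e0 n i} := by
      ext x
      simp only [Finset.mem_inter, Finset.mem_insert, Finset.mem_singleton]
      constructor
      · rintro ⟨hx, rfl | rfl⟩; rfl; exact absurd hx h1
      · rintro rfl; exact ⟨h0, Or.inl rfl⟩
    rw [this, Finset.card_singleton]
    simp [h0, h1]
  · have : S ∩ {e0 n i, e1 n i} = {e1 n i} := by
      ext x
      simp only [Finset.mem_inter, Finset.mem_insert, Finset.mem_singleton]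
      constructor
      · rintro ⟨hx, rfl | rfl⟩; exact absurd hx h0; rfl
      · rintro rfl; exact ⟨h1, Or.inr rfl⟩
    rw [this, Finset.card_singleton]
    simp [h0, h1]
  · have : S ∩ {e0 n i, e1 n i} = ∅ := by
      ext x
      simp only [Finset.mem_inter, Finset.mem_insert, Finset.mem_singleton, Finset.notMem_empty,
        iff_false, not_and]
      rintro hx (rfl | rfl)
      · exact h0 hx
      · exact h1 hx
    rw [this, Finset.card_empty]
    simp [h0, h1]

lemma mem_pairsSet {n : ℕ} (T : Finset (Fin n)) (μ : Fin (2*n)) :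
    μ ∈ pairsSet n T ↔ qidx n μ ∈ T := by simp [pairsSet]

lemma qidx_e0 {n : ℕ} (i : Fin n) : qidx n (e0 n i) = i := by apply Fin.ext; simp [e0]
lemma qidx_e1 {n : ℕ} (i : Fin n) : qidx n (e1 n i) = i := by apply Fin.ext; simp [e1]; omega

lemma mu_eq {n : ℕ} (μ : Fin (2*n)) : μ = e0 n (qidx n μ) ∨ μ = e1 n (qidx n μ) := by
  rcases Nat.even_or_odd μ.1 with ⟨k, hk⟩ | ⟨k, hk⟩
  · left; apply Fin.ext; simp [e0]; omega
  · right; apply Fin.ext; simp [e1]; omega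

lemma card_pairsSet {n : ℕ} (T : Finset (Fin n)) : (pairsSet n T).card = 2 * T.card := by
  rw [Finset.card_eq_sum_card_fiberwise (f := qidx n) (t := T)
    (fun μ hμ => (mem_pairsSet T μ).mp hμ)]
  rw [Finset.sum_congr rfl (fun i hi => ?_), Finset.sum_const, smul_eq_mul, mul_comm]
  show ((pairsSet n T).filter (fun μ => qidx n μ = i)).card = 2
  have heq : (pairsSet n T).filter (fun μ => qidx n μ = i) = {e0 n i, e1 n i} := by
    ext μ
    simp only [Finset.mem_filter, mem_pairsSet, Finset.mem_insert, Finset.mem_singleton]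
    constructor
    · rintro ⟨_, hq⟩
      rcases mu_eq μ with h | h <;> rw [hq] at h
      · exact Or.inl h
      · exact Or.inr h
    · rintro (rfl | rfl)
      · exact ⟨by rw [qidx_e0]; exact hi, qidx_e0 i⟩
      · exact ⟨by rw [qidx_e1]; exact hi, qidx_e1 i⟩
  rw [heq]
  rw [Finset.card_insert_of_notMem, Finset.card_singleton]
  simp only [Finset.mem_singleton]
  intro h; have := congrArg Fin.val h; simp [e0, e1] at this

lemma paired_pairsSet {n : ℕ} (T : Finset (Fin n)) : paired n (pairsSet n T) := by
  intro i
  rw [mem_pairsSet, mem_pairsSet, qidx_e0, qidx_e1]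

lemma pairsSet_eq_of_paired {n : ℕ} (S : Finset (Fin (2*n))) (hS : paired n S) :
    pairsSet n (Finset.univ.filter fun i => e0 n i ∈ S) = S := by
  ext μ
  rw [mem_pairsSet, Finset.mem_filter]
  rcases mu_eq μ with h | h
  · constructor
    · rintro ⟨_, h0⟩; rw [h]; exact h0
    · intro hμ; exact ⟨Finset.mem_univ _, by rw [← h]; exact hμ⟩
  · rw [show (e0 n (qidx n μ) ∈ S) = (e1 n (qidx n μ) ∈ S) from propext (hS _)]
    constructor
    · rintro ⟨_, h0⟩; rw [h]; exact h0
    · intro hμ; exact ⟨Finset.mem_univ _, by rw [← h]; exact hμ⟩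

lemma card_paired {n : ℕ} (l : ℕ) :
    (Finset.univ.filter fun S : Finset (Fin (2*n)) => S.card = 2*l ∧ paired n S).card
      = n.choose l := by
  have key : (Finset.univ.filter fun S : Finset (Fin (2*n)) => S.card = 2*l ∧ paired n S).card
      = (Finset.univ.filter fun T : Finset (Fin n) => T.card = l).card := by
    apply Finset.card_bij (fun S _ => Finset.univ.filter fun i => e0 n i ∈ S)
    · intro S hS
      simp only [Finset.mem_filter, Finset.mem_univ, true_and] at hS ⊢
      obtain ⟨hc, hp⟩ := hS
      have := card_pairsSet (n := n) (Finset.univ.filter fun i => e0 n i ∈ S)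
      rw [pairsSet_eq_of_paired S hp, hc] at this
      omega
    · intro S hS S' hS' h
      simp only [Finset.mem_filter, Finset.mem_univ, true_and] at hS hS'
      rw [← pairsSet_eq_of_paired S hS.2, ← pairsSet_eq_of_paired S' hS'.2, h]
    · intro T hT
      simp only [Finset.mem_filter, Finset.mem_univ, true_and] at hT
      refine ⟨pairsSet n T, ?_, ?_⟩
      · simp only [Finset.mem_filter, Finset.mem_univ, true_and]
        exact ⟨by rw [card_pairsSet, hT], paired_pairsSet T⟩
      · ext i
        simp only [Finset.mem_filter, Finset.mem_univ, true_and, mem_pairsSet, qidx_e0]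
  rw [key]
  rw [← Finset.powerset_univ, ← Finset.powersetCard_eq_filter, Finset.card_powersetCard,
    Finset.card_univ, Fintype.card_fin]

lemma trace_mul_outer {n : ℕ} (A : QOp n) (b : Fin n → Bool) :
    Matrix.trace (A * outer (ket n b) (ket n b)) = A b b := by
  simp only [Matrix.trace, Matrix.diag, Matrix.mul_apply, outer, ket, Matrix.of_apply]
  simp [apply_ite, Finset.sum_ite_eq, Finset.mul_sum]

lemma abs_gammaS_diag {n : ℕ} (S : Finset (Fin (2*n))) (b : Fin n → Bool) :
    ‖(gammaS n S) b b‖ = if paired n S then 1 else 0 := by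
  rw [gammaS, abs_prod_apply]
  have hiff : (b = flipL n (S.sort (· ≤ ·)) b) ↔ paired n S := by
    constructor
    · intro h i
      rw [← bodd_fcount_sort]
      have hcf := congrFun h i
      simp only [flipL] at hcf
      cases hc : (fcount (S.sort (· ≤ ·)) i).bodd
      · rfl
      · rw [hc] at hcf; cases hb : b i <;> rw [hb] at hcf <;> simp at hcf
    · intro hp
      funext i
      simp only [flipL]
      rw [(bodd_fcount_sort S i).mpr (hp i)]
      simp
  rw [if_congr hiff rfl rfl]

lemma inner_sum {n : ℕ} (l : ℕ) (b : Fin n → Bool) :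
    (∑ S ∈ Finset.univ.filter (fun S : Finset (Fin (2 * n)) => S.card = 2 * l),
        ‖Matrix.trace (gammaS n S * outer (ket n b) (ket n b))‖ ^ 2)
      = (n.choose l : ℝ) := by
  have hterm : ∀ S : Finset (Fin (2*n)),
      ‖Matrix.trace (gammaS n S * outer (ket n b) (ket n b))‖ ^ 2
        = if paired n S then (1 : ℝ) else 0 := by
    intro S
    rw [trace_mul_outer, abs_gammaS_diag]
    split_ifs <;> norm_num
  rw [Finset.sum_congr rfl (fun S _ => hterm S)]
  rw [Finset.sum_boole, Finset.filter_filter]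
  rw [card_paired l]

/-- `Σ_b Σ_{|S|=2l} |tr(γ_S |b⟩⟨b|)|² = 2^n binom(n,l)`, hence the
Matchgate channel eigenvalue `f_{2l}` equals `binom(2n,2l)⁻¹ binom(n,l)`. -/
theorem matchgate_channel_eigenvalue (n l : ℕ) (hn : 1 ≤ n) (hl : l ≤ n) :
    (∑ b : Fin n → Bool,
      ∑ S ∈ Finset.univ.filter (fun S : Finset (Fin (2 * n)) => S.card = 2 * l),
        ‖Matrix.trace (gammaS n S * outer (ket n b) (ket n b))‖ ^ 2)
      = (2 : ℝ) ^ n * (n.choose l)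
    ∧ (((2 * n).choose (2 * l) : ℝ))⁻¹ * ((2 : ℝ) ^ n)⁻¹ *
        (∑ b : Fin n → Bool,
          ∑ S ∈ Finset.univ.filter (fun S : Finset (Fin (2 * n)) => S.card = 2 * l),
            ‖Matrix.trace (gammaS n S * outer (ket n b) (ket n b))‖ ^ 2)
      = (((2 * n).choose (2 * l) : ℝ))⁻¹ * (n.choose l) := by
  have h1 : (∑ b : Fin n → Bool,
      ∑ S ∈ Finset.univ.filter (fun S : Finset (Fin (2 * n)) => S.card = 2 * l),
        ‖Matrix.trace (gammaS n S * outer (ket n b) (ket n b))‖ ^ 2)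
      = (2 : ℝ) ^ n * (n.choose l) := by
    rw [Finset.sum_congr rfl (fun b _ => inner_sum l b), Finset.sum_const,
      Finset.card_univ, nsmul_eq_mul]
    congr 1
    rw [Fintype.card_fun, Fintype.card_bool, Fintype.card_fin]
    push_cast
    ring
  refine ⟨h1, ?_⟩
  rw [h1]
  have h2 : ((2:ℝ)^n) ≠ 0 := by positivity
  rw [mul_assoc, ← mul_assoc ((2:ℝ)^n)⁻¹ _ _, inv_mul_cancel₀ h2, one_mul]

end QCQMC

end
end

section
/- Let n ≥ 1, let ζ be an even integer with 0 < ζ ≤ n, and let |φ⟩ ∈ ℂ^{2^n} be a linear combination of computational basis states of Hamming weight exactly ζ. Let X be any 2^n×2^n complex matrix supported on the {0,ζ}-subspace, i.e., X = P_{0,ζ} X P_{0,ζ}. Then for every l with 0 ≤ l ≤ n, tr(|φ⟩⟨0…0| · Π_{2l}(X)) = b_{2l} · tr(|φ⟩⟨0…0| · X), where b_{2l} = 2^{ζ−n}·binom(n−ζ, l−ζ/2) if ζ/2 ≤ l ≤ n−ζ/2 and b_{2l} = 0 otherwise. -/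
open Matrix Finset

noncomputable section

namespace QCQMC

variable {n : ℕ}

/-- qubit index of a Majorana index -/
def jq {n : ℕ} (μ : Fin (2 * n)) : Fin n := ⟨μ.1 / 2, by have := μ.2; omega⟩

def eI {n : ℕ} (j : Fin n) : Fin (2 * n) := ⟨2 * j.1, by have := j.2; omega⟩
def oI {n : ℕ} (j : Fin n) : Fin (2 * n)  := ⟨2 * j.1 + 1, by have := j.2; omega⟩

lemma jq_eI (j : Fin n) : jq (eI j) = j := by
  apply Fin.ext; show 2 * j.1 / 2 = j.1; omega
lemma jq_oI (j : Fin n) : jq (oI j) = j := by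
  apply Fin.ext; show (2 * j.1 + 1) / 2 = j.1; omega

lemma eI_or_oI (μ : Fin (2 * n)) : μ = eI (jq μ) ∨ μ = oI (jq μ) := by
  rcases Nat.even_or_odd μ.1 with ⟨k, hk⟩ | ⟨k, hk⟩
  · left; apply Fin.ext; show μ.1 = 2 * (μ.1 / 2); omega
  · right; apply Fin.ext; show μ.1 = 2 * (μ.1 / 2) + 1; omega

/-- flip qubit `jq μ` -/
def qflip {n : ℕ} (μ : Fin (2 * n)) (b : Fin n → Bool) : Fin n → Bool :=
  Function.update b (jq μ) (!b (jq μ))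

/-- phase of `γ_μ` on row `b` -/
def qph {n : ℕ} (μ : Fin (2 * n)) (b : Fin n → Bool) : ℂ :=
  (∏ i : Fin n, if i.1 < μ.1 / 2 ∧ b i = true then (-1 : ℂ) else 1) *
  (if μ.1 % 2 = 0 then 1 else if b (jq μ) = true then Complex.I else -Complex.I)

lemma majorana_apply_s14 (μ : Fin (2 * n)) (b b' : Fin n → Bool) :
    majorana n μ b b' = if b' = qflip μ b then qph μ b else 0 := by
  have hcond : ((b (jq μ) ≠ b' (jq μ)) ∧ ∀ i : Fin n, i.1 ≠ μ.1 / 2 → b i = b' i)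
      ↔ b' = qflip μ b := by
    constructor
    · rintro ⟨h1, h2⟩
      funext i
      by_cases hij : i = jq μ
      · rw [hij]
        simp only [qflip, Function.update_self]
        revert h1
        rcases hb : b (jq μ) <;> rcases hb' : b' (jq μ) <;> simp_all
      · rw [qflip, Function.update_of_ne hij]
        refine (h2 i ?_).symm
        intro hc; exact hij (Fin.ext hc)
    · intro h; subst h
      refine ⟨?_, ?_⟩
      · simp only [qflip, Function.update_self]
        cases b (jq μ) <;> simp
      · intro i hi
        rw [qflip, Function.update_of_ne]
        intro hc; apply hi; rw [hc]; rfl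
  unfold majorana
  rw [Matrix.of_apply]
  split
  next hc => rw [if_pos (hcond.mp hc)]; rfl
  next hc => rw [if_neg (fun h => hc (hcond.mpr h))]

/-- iterated flips along a list -/
def qflips {n : ℕ} : List (Fin (2 * n)) → (Fin n → Bool) → (Fin n → Bool)
  | [], b => b
  | μ :: L, b => qflips L (qflip μ b)

/-- iterated phase along a list -/
def qphs {n : ℕ} : List (Fin (2 * n)) → (Fin n → Bool) → ℂ
  | [], _ => 1
  | μ :: L, b => qph μ b * qphs L (qflip μ b)

lemma prod_majorana_apply (L : List (Fin (2 * n))) (b b' : Fin n → Bool) :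
    (L.map (majorana n)).prod b b' = if b' = qflips L b then qphs L b else 0 := by
  induction L generalizing b with
  | nil => simp [qflips, qphs, Matrix.one_apply, eq_comm]; congr
  | cons μ L ih =>
    rw [List.map_cons, List.prod_cons, Matrix.mul_apply]
    rw [Finset.sum_eq_single (qflip μ b)]
    · rw [majorana_apply_s14, if_pos rfl, ih]
      simp [qflips, qphs]; congr
    · intro c _ hc
      rw [majorana_apply_s14, if_neg hc, zero_mul]
    · intro h; exact absurd (Finset.mem_univ _) h

lemma gammaS_apply_s14 (S : Finset (Fin (2 * n))) (b b' : Fin n → Bool) :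
    gammaS n S b b' = if b' = qflips (S.sort (· ≤ ·)) b then qphs (S.sort (· ≤ ·)) b else 0 :=
  prod_majorana_apply _ b b'

lemma qph_mul_conj (μ : Fin (2 * n)) (b : Fin n → Bool) :
    qph μ b * (starRingEnd ℂ) (qph μ b) = 1 := by
  rw [qph, map_mul (starRingEnd ℂ), map_prod]
  have h1 : (∏ i : Fin n, if i.1 < μ.1 / 2 ∧ b i = true then (-1 : ℂ) else 1) *
      (∏ i : Fin n, (starRingEnd ℂ) (if i.1 < μ.1 / 2 ∧ b i = true then (-1 : ℂ) else 1)) = 1 := by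
    rw [← Finset.prod_mul_distrib]
    apply Finset.prod_eq_one
    intro i _
    split_ifs <;> simp
  have h2 : (if μ.1 % 2 = 0 then (1:ℂ) else if b (jq μ) = true then Complex.I else -Complex.I) *
      (starRingEnd ℂ) (if μ.1 % 2 = 0 then (1:ℂ) else if b (jq μ) = true then Complex.I else -Complex.I) = 1 := by
    split_ifs <;> simp [Complex.conj_I] <;> ring_nf <;> simp [Complex.I_sq]
  rw [mul_mul_mul_comm, h1, h2, one_mul]

lemma qphs_mul_conj (L : List (Fin (2 * n))) (b : Fin n → Bool) :
    qphs L b * (starRingEnd ℂ) (qphs L b) = 1 := by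
  induction L generalizing b with
  | nil => simp [qphs]
  | cons μ L ih =>
    rw [qphs, map_mul (starRingEnd ℂ)]
    calc qph μ b * qphs L (qflip μ b) * ((starRingEnd ℂ) (qph μ b) * (starRingEnd ℂ) (qphs L (qflip μ b)))
        = (qph μ b * (starRingEnd ℂ) (qph μ b)) * (qphs L (qflip μ b) * (starRingEnd ℂ) (qphs L (qflip μ b))) := by ring
      _ = 1 := by rw [qph_mul_conj, ih, one_mul]
/-- flip pattern of a Majorana set -/
def mflip {n : ℕ} (S : Finset (Fin (2 * n))) (b : Fin n → Bool) : Fin n → Bool :=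
  fun i => xor (b i) (xor (decide (eI i ∈ S)) (decide (oI i ∈ S)))

lemma qflips_countP (L : List (Fin (2 * n))) (b : Fin n → Bool) (i : Fin n) :
    qflips L b i = xor (b i) (decide ((L.countP (fun μ => jq μ = i)) % 2 = 1)) := by
  induction L generalizing b with
  | nil => simp [qflips]
  | cons μ L ih =>
    rw [qflips, ih, List.countP_cons]
    by_cases h : jq μ = i
    · subst h
      rw [qflip, Function.update_self]
      simp only [decide_eq_true_eq, if_pos rfl]
      have hpar : ((L.countP (fun ν => jq ν = jq μ) + 1) % 2 = 1) ↔
          ¬ ((L.countP (fun ν => jq ν = jq μ)) % 2 = 1) := by omega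
      by_cases hc : (L.countP (fun ν => jq ν = jq μ)) % 2 = 1 <;>
        cases b (jq μ) <;> simp [hc, hpar]
    · rw [qflip, Function.update_of_ne (fun hcc => h hcc.symm)]
      simp [h]

lemma filter_jq_card (S : Finset (Fin (2 * n))) (i : Fin n) :
    (S.filter (fun μ => jq μ = i)).card
      = (if eI i ∈ S then 1 else 0) + (if oI i ∈ S then 1 else 0) := by
  have hne : eI i ≠ oI i := by
    intro h; have := congrArg Fin.val h; simp [eI, oI] at this
  have hset : S.filter (fun μ => jq μ = i) = ({eI i, oI i} : Finset (Fin (2 * n))).filter (· ∈ S) := by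
    ext μ
    simp only [Finset.mem_filter, Finset.mem_insert, Finset.mem_singleton]
    constructor
    · rintro ⟨hμS, hμi⟩
      refine ⟨?_, hμS⟩
      rcases eI_or_oI μ with h | h
      · left; rw [h, hμi]
      · right; rw [h, hμi]
    · rintro ⟨h | h, hμS⟩
      · subst h; exact ⟨hμS, jq_eI i⟩
      · subst h; exact ⟨hμS, jq_oI i⟩
  rw [hset, Finset.filter_insert, Finset.filter_singleton]
  by_cases h1 : eI i ∈ S <;> by_cases h2 : oI i ∈ S <;>
    simp [h1, h2, Finset.card_insert_of_notMem, Finset.mem_singleton, hne]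

lemma sort_countP (S : Finset (Fin (2 * n))) (i : Fin n) :
    ((S.sort (· ≤ ·)).countP (fun μ => decide (jq μ = i))) = (S.filter (fun μ => jq μ = i)).card := by
  rw [(Finset.sort_perm_toList S (· ≤ ·)).countP_eq]
  rw [← Multiset.coe_countP, Finset.coe_toList]
  simp [Finset.filter, Finset.card, Multiset.countP_eq_card_filter]

lemma qflips_sort (S : Finset (Fin (2 * n))) (b : Fin n → Bool) :
    qflips (S.sort (· ≤ ·)) b = mflip S b := by
  funext i
  rw [qflips_countP, mflip, sort_countP, filter_jq_card]
  by_cases h1 : eI i ∈ S <;> by_cases h2 : oI i ∈ S <;>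
    cases b i <;> simp [h1, h2]
lemma eI_ne_oI (i k : Fin n) : eI i ≠ oI k := by
  intro h; have := congrArg Fin.val h; simp [eI, oI] at this; omega

lemma eI_inj {i k : Fin n} (h : eI i = eI k) : i = k := by
  have := congrArg Fin.val h; simp [eI] at this; exact Fin.ext (by omega)

lemma oI_inj {i k : Fin n} (h : oI i = oI k) : i = k := by
  have := congrArg Fin.val h; simp [oI] at this; exact Fin.ext (by omega)

/-- the swap map `eI j ↦ oI j`, identity elsewhere -/
def fswap {n : ℕ} (j : Fin n) (μ : Fin (2 * n)) : Fin (2 * n) :=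
  if μ = eI j then oI j else μ

lemma jq_fswap (j : Fin n) (μ : Fin (2 * n)) : jq (fswap j μ) = jq μ := by
  rw [fswap]
  split
  next h => rw [h, jq_oI, jq_eI]
  next => rfl

lemma qflip_fswap (j : Fin n) (μ : Fin (2 * n)) : qflip (fswap j μ) = qflip μ := by
  funext b i; rw [qflip, qflip, jq_fswap]

lemma qph_oI (j : Fin n) (r : Fin n → Bool) :
    qph (oI j) r = (if r j = true then Complex.I else -Complex.I) * qph (eI j) r := by
  rw [qph, qph, jq_oI]
  have h1 : (oI j).1 / 2 = j.1 := by show (2 * j.1 + 1) / 2 = j.1; omega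
  have h2 : (eI j).1 / 2 = j.1 := by show (2 * j.1) / 2 = j.1; omega
  have h3 : (oI j).1 % 2 = 1 := by show (2 * j.1 + 1) % 2 = 1; omega
  have h4 : (eI j).1 % 2 = 0 := by show (2 * j.1) % 2 = 0; omega
  rw [h1, h2, h3, h4]
  norm_num
  split <;> ring

lemma qphs_swap_list (j : Fin n) (L1 L2 : List (Fin (2 * n))) (r : Fin n → Bool)
    (hL1 : ∀ μ ∈ L1, jq μ ≠ j) (hL2 : eI j ∉ L2) :
    qphs ((L1 ++ eI j :: L2).map (fswap j)) r
      = (if r j = true then Complex.I else -Complex.I) * qphs (L1 ++ eI j :: L2) r := by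
  induction L1 generalizing r with
  | nil =>
    simp only [List.nil_append, List.map_cons]
    have hmap : L2.map (fswap j) = L2 := by
      rw [List.map_congr_left (g := id), List.map_id]
      intro μ hμ
      rw [fswap, if_neg (fun hc => hL2 (by rw [← hc]; exact hμ))]; rfl
    have hfe : fswap j (eI j) = oI j := by rw [fswap, if_pos rfl]
    rw [hfe, hmap, qphs, qphs]
    have hfl : qflip (oI j) = qflip (eI j) := by
      funext b i; rw [qflip, qflip, jq_oI, jq_eI]
    rw [hfl, qph_oI, mul_assoc]
  | cons μ L1 ih =>
    have hμ : jq μ ≠ j := hL1 μ List.mem_cons_self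
    have hfμ : fswap j μ = μ := by
      rw [fswap, if_neg]; intro hc; exact hμ (by rw [hc, jq_eI])
    simp only [List.cons_append, List.map_cons, hfμ]
    rw [qphs, qphs]
    rw [ih (qflip μ r) (fun ν hν => hL1 ν (List.mem_cons_of_mem μ hν))]
    have hrj : qflip μ r j = r j := by
      rw [qflip, Function.update_of_ne (fun hc => hμ hc.symm)]
    rw [hrj]; ring

lemma sort_swap (j : Fin n) (S : Finset (Fin (2 * n))) (he : eI j ∈ S) (ho : oI j ∉ S) :
    (insert (oI j) (S.erase (eI j))).sort (· ≤ ·) = (S.sort (· ≤ ·)).map (fswap j) := by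
  have hnd : ((S.sort (· ≤ ·)).map (fswap j)).Nodup := by
    refine List.Nodup.map_on ?_ (Finset.sort_nodup _ _)
    intro x hx y hy hxy
    rw [Finset.mem_sort] at hx hy
    rw [fswap, fswap] at hxy
    split at hxy <;> split at hxy
    · next h1 h2 => rw [h1, h2]
    · next h1 h2 => exact absurd (hxy ▸ hy) ho
    · next h1 h2 => exact absurd (hxy ▸ hx) ho
    · exact hxy
  have htf : ((S.sort (· ≤ ·)).map (fswap j)).toFinset = insert (oI j) (S.erase (eI j)) := by
    ext μ
    rw [List.mem_toFinset, List.mem_map, Finset.mem_insert, Finset.mem_erase]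
    constructor
    · rintro ⟨ν, hν, rfl⟩
      rw [Finset.mem_sort] at hν
      rw [fswap]
      split
      · exact Or.inl rfl
      · next h => exact Or.inr ⟨h, hν⟩
    · rintro (rfl | ⟨hne, hμ⟩)
      · exact ⟨eI j, (Finset.mem_sort (· ≤ ·)).mpr he, by rw [fswap, if_pos rfl]⟩
      · exact ⟨μ, (Finset.mem_sort (· ≤ ·)).mpr hμ, by rw [fswap, if_neg hne]⟩
  have hperm : ((S.sort (· ≤ ·)).map (fswap j)).Perm ((insert (oI j) (S.erase (eI j))).sort (· ≤ ·)) := by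
    refine List.perm_of_nodup_nodup_toFinset_eq hnd (Finset.sort_nodup _ _) ?_
    rw [htf, Finset.sort_toFinset]
  have hsorted : List.Pairwise (· ≤ ·) ((S.sort (· ≤ ·)).map (fswap j)) := by
    rw [List.pairwise_map]
    refine (Finset.sortedLT_sort S).pairwise.imp_of_mem ?_
    intro x y hx hy hxy
    rw [Finset.mem_sort] at hx hy
    rw [fswap, fswap]
    split <;> split
    · exact le_refl _
    · next h1 h2 =>
      subst h1
      have : y.1 ≠ 2 * j.1 + 1 := fun hc => ho (by
        have : y = oI j := Fin.ext hc
        exact this ▸ hy)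
      have hxy' : (eI j).1 < y.1 := hxy
      simp only [eI] at hxy'
      show (oI j).1 ≤ y.1
      simp only [oI]
      omega
    · next h1 h2 =>
      subst h2
      have hxy' : x.1 < (eI j).1 := hxy
      show x.1 ≤ (oI j).1
      simp only [eI] at hxy'
      simp only [oI]
      omega
    · exact le_of_lt hxy
  exact (List.Perm.eq_of_pairwise' hsorted (Finset.pairwise_sort _ _) hperm).symm

lemma mflip_swap (j : Fin n) (S : Finset (Fin (2 * n))) (he : eI j ∈ S) (ho : oI j ∉ S)
    (b : Fin n → Bool) :
    mflip (insert (oI j) (S.erase (eI j))) b = mflip S b := by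
  funext i
  rw [mflip, mflip]
  by_cases hij : i = j
  · subst hij
    have h1 : eI i ∉ insert (oI i) (S.erase (eI i)) := by
      rw [Finset.mem_insert, Finset.mem_erase]
      rintro ((h : eI i = oI i) | ⟨h, _⟩)
      · exact eI_ne_oI i i h
      · exact h rfl
    have h2 : oI i ∈ insert (oI i) (S.erase (eI i)) := Finset.mem_insert_self _ _
    simp [h1, h2, he, ho]
  · have h1 : eI i ∈ insert (oI j) (S.erase (eI j)) ↔ eI i ∈ S := by
      rw [Finset.mem_insert, Finset.mem_erase]
      constructor
      · rintro ((h : eI i = oI j) | ⟨_, h⟩)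
        · exact absurd h (eI_ne_oI i j)
        · exact h
      · intro h
        exact Or.inr ⟨fun hc => hij (eI_inj hc), h⟩
    have h2 : oI i ∈ insert (oI j) (S.erase (eI j)) ↔ oI i ∈ S := by
      rw [Finset.mem_insert, Finset.mem_erase]
      constructor
      · rintro (h | ⟨_, h⟩)
        · exact absurd (oI_inj h) hij
        · exact h
      · intro h
        exact Or.inr ⟨fun hc => eI_ne_oI j i hc.symm, h⟩
    by_cases ha : eI i ∈ S <;> by_cases hb : oI i ∈ S <;> simp [h1, h2, ha, hb]

lemma qphs_swap (j : Fin n) (S : Finset (Fin (2 * n))) (he : eI j ∈ S) (ho : oI j ∉ S)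
    (r : Fin n → Bool) :
    qphs ((insert (oI j) (S.erase (eI j))).sort (· ≤ ·)) r
      = (if r j = true then Complex.I else -Complex.I) * qphs (S.sort (· ≤ ·)) r := by
  rw [sort_swap j S he ho]
  obtain ⟨L1, L2, hdecomp⟩ := List.append_of_mem ((Finset.mem_sort (· ≤ ·)).mpr he)
  have hnd := Finset.sort_nodup S (· ≤ ·)
  rw [hdecomp] at hnd
  obtain ⟨hnd1, hnd2, hdisj⟩ := List.nodup_append.mp hnd
  have heL2 : eI j ∉ L2 := (List.nodup_cons.mp hnd2).1
  have hsrt := (Finset.sortedLT_sort S).pairwise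
  rw [hdecomp] at hsrt
  obtain ⟨_, _, hlt⟩ := List.pairwise_append.mp hsrt
  have hL1 : ∀ μ ∈ L1, jq μ ≠ j := by
    intro μ hμ hc
    have h1 : μ.1 < (eI j).1 := hlt μ hμ (eI j) List.mem_cons_self
    have h2 : μ.1 / 2 = j.1 := congrArg Fin.val hc
    simp only [eI] at h1
    omega
  rw [hdecomp]
  exact qphs_swap_list j L1 L2 r hL1 heL2
/-- the all-zero bitstring -/
def zv (n : ℕ) : Fin n → Bool := fun _ => false

lemma mflip_zv (S : Finset (Fin (2 * n))) (i : Fin n) :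
    mflip S (zv n) i = xor (decide (eI i ∈ S)) (decide (oI i ∈ S)) := by
  rw [mflip]; simp [zv]

lemma card_decomp (S : Finset (Fin (2 * n))) :
    S.card = ∑ i : Fin n, ((if eI i ∈ S then 1 else 0) + (if oI i ∈ S then 1 else 0)) := by
  rw [Finset.card_eq_sum_card_fiberwise (f := jq) (t := Finset.univ) (fun x _ => Finset.mem_univ _)]
  exact Finset.sum_congr rfl (fun i _ => filter_jq_card S i)

lemma card_structure (b : Fin n → Bool) (S : Finset (Fin (2 * n)))
    (hm : mflip S (zv n) = b) :
    S.card = hamming b + 2 * (Finset.univ.filter (fun i => b i = false ∧ eI i ∈ S)).card := by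
  have hxor : ∀ i : Fin n, xor (decide (eI i ∈ S)) (decide (oI i ∈ S)) = b i := by
    intro i; rw [← mflip_zv, hm]
  rw [card_decomp S]
  rw [← Finset.sum_filter_add_sum_filter_not Finset.univ (fun i => b i = true)]
  have h1 : ∑ i ∈ Finset.univ.filter (fun i => b i = true),
      ((if eI i ∈ S then 1 else 0) + (if oI i ∈ S then 1 else 0)) =
      (Finset.univ.filter (fun i => b i = true)).card := by
    rw [Finset.card_eq_sum_ones]
    refine Finset.sum_congr rfl (fun i hi => ?_)
    rw [Finset.mem_filter] at hi
    have := hxor i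
    rw [hi.2] at this
    by_cases he : eI i ∈ S <;> by_cases ho : oI i ∈ S <;> simp [he, ho] at this ⊢
  have h2 : ∑ i ∈ Finset.univ.filter (fun i => ¬ b i = true),
      ((if eI i ∈ S then 1 else 0) + (if oI i ∈ S then 1 else 0)) =
      2 * (Finset.univ.filter (fun i => b i = false ∧ eI i ∈ S)).card := by
    rw [Finset.card_eq_sum_ones, Finset.mul_sum, Finset.sum_filter]
    rw [Finset.sum_filter]
    refine Finset.sum_congr rfl (fun i _ => ?_)
    by_cases hb : b i = true
    · simp [hb]
    · have := hxor i
      rw [Bool.not_eq_true] at hb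
      rw [hb] at this
      have hee : (eI i ∈ S) ↔ (oI i ∈ S) := by
        by_cases he : eI i ∈ S <;> by_cases ho : oI i ∈ S <;> simp [he, ho] at this ⊢
      by_cases he : eI i ∈ S <;> simp [he, hee.symm, hb, hee.mp, Bool.not_eq_true] <;> omega
  rw [h1, h2, hamming]

/-- reconstruction map -/
def recon {n : ℕ} (b : Fin n → Bool) (A T : Finset (Fin n)) : Finset (Fin (2 * n)) :=
  Finset.univ.filter (fun μ => if b (jq μ) = true
    then (if μ.1 % 2 = 1 then jq μ ∈ A else jq μ ∉ A) else jq μ ∈ T)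

lemma eI_mem_recon (b : Fin n → Bool) (A T : Finset (Fin n)) (i : Fin n) :
    eI i ∈ recon b A T ↔ (if b i = true then i ∉ A else i ∈ T) := by
  rw [recon, Finset.mem_filter]
  have h2 : (eI i).1 % 2 = 0 := by show (2 * i.1) % 2 = 0; omega
  simp [jq_eI, h2]
lemma oI_mem_recon (b : Fin n → Bool) (A T : Finset (Fin n)) (i : Fin n) :
    oI i ∈ recon b A T ↔ (if b i = true then i ∈ A else i ∈ T) := by
  rw [recon, Finset.mem_filter]
  have h2 : (oI i).1 % 2 = 1 := by show (2 * i.1 + 1) % 2 = 1; omega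
  simp [jq_oI, h2]

lemma mflip_recon (b : Fin n → Bool) (A T : Finset (Fin n)) :
    mflip (recon b A T) (zv n) = b := by
  funext i
  rw [mflip_zv]
  by_cases hb : b i = true <;>
    by_cases hA : i ∈ A <;> by_cases hT : i ∈ T <;>
      simp [eI_mem_recon, oI_mem_recon, hb, hA, hT, Bool.not_eq_true] at * <;>
      simp [hb]

/-- the main counting lemma -/
lemma count_mflip (b : Fin n → Bool) (l : ℕ) (hl : hamming b / 2 ≤ l ∧ l + hamming b / 2 ≤ n)
    (hev : Even (hamming b)) :
    (Finset.univ.filter (fun S : Finset (Fin (2 * n)) =>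
        S.card = 2 * l ∧ mflip S (zv n) = b)).card
      = 2 ^ (hamming b) * Nat.choose (n - hamming b) (l - hamming b / 2) := by
  obtain ⟨m, hm⟩ := hev
  have hζ : hamming b = 2 * m := by omega
  have hcf : (Finset.univ.filter (fun i : Fin n => b i = false)).card = n - hamming b := by
    have := Finset.card_filter_add_card_filter_not (s := (Finset.univ : Finset (Fin n)))
      (p := fun i => b i = true)
    simp only [Finset.card_univ, Fintype.card_fin] at this
    have he : (Finset.univ.filter (fun i : Fin n => ¬ b i = true)) =
        (Finset.univ.filter (fun i : Fin n => b i = false)) := by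
      ext i; simp [Bool.not_eq_true]
    rw [he] at this
    rw [hamming]
    omega
  have hct : (Finset.univ.filter (fun i : Fin n => b i = true)).card = hamming b := rfl
  have key : (Finset.univ.filter (fun S : Finset (Fin (2 * n)) =>
        S.card = 2 * l ∧ mflip S (zv n) = b)).card
      = (((Finset.univ.filter (fun i : Fin n => b i = true)).powerset ×ˢ
          (Finset.univ.filter (fun i : Fin n => b i = false)).powersetCard (l - m)).card) := by
    refine Finset.card_bij'
      (fun S _ => (Finset.univ.filter (fun i => b i = true ∧ oI i ∈ S),
                   Finset.univ.filter (fun i => b i = false ∧ eI i ∈ S)))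
      (fun p _ => recon b p.1 p.2) ?_ ?_ ?_ ?_
    · intro S hS
      rw [Finset.mem_filter] at hS
      obtain ⟨_, hcard, hmf⟩ := hS
      rw [Finset.mem_product]
      constructor
      · rw [Finset.mem_powerset]
        intro i hi
        rw [Finset.mem_filter] at hi ⊢
        exact ⟨hi.1, hi.2.1⟩
      · rw [Finset.mem_powersetCard]
        refine ⟨?_, ?_⟩
        · intro i hi
          rw [Finset.mem_filter] at hi ⊢
          exact ⟨hi.1, hi.2.1⟩
        · have := card_structure b S hmf
          show (Finset.univ.filter (fun i => b i = false ∧ eI i ∈ S)).card = l - m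
          omega
    · rintro ⟨A, T⟩ hp
      rw [Finset.mem_product, Finset.mem_powerset, Finset.mem_powersetCard] at hp
      obtain ⟨hA, hT, hTc⟩ := hp
      rw [Finset.mem_filter]
      refine ⟨Finset.mem_univ _, ?_, mflip_recon b A T⟩
      have hfT : Finset.univ.filter (fun i => b i = false ∧ eI i ∈ recon b A T) = T := by
        ext i
        rw [Finset.mem_filter, eI_mem_recon]
        constructor
        · rintro ⟨_, hb, hi⟩
          rw [if_neg (by rw [hb]; simp)] at hi
          exact hi
        · intro hi
          have hb : b i = false := by
            have := hT hi
            rw [Finset.mem_filter] at this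
            exact this.2
          exact ⟨Finset.mem_univ _, hb, by rw [if_neg (by rw [hb]; simp)]; exact hi⟩
      rw [card_structure b _ (mflip_recon b A T), hfT, hTc]
      omega
    · intro S hS
      rw [Finset.mem_filter] at hS
      obtain ⟨_, _, hmf⟩ := hS
      have hxor : ∀ i : Fin n, xor (decide (eI i ∈ S)) (decide (oI i ∈ S)) = b i := by
        intro i; rw [← mflip_zv, hmf]
      ext μ
      rcases eI_or_oI μ with hμ | hμ
      · rw [hμ, eI_mem_recon]
        set i := jq μ
        have := hxor i
        by_cases hb : b i = true
        · rw [if_pos hb, Finset.mem_filter]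
          rw [hb] at this
          by_cases he : eI i ∈ S <;> by_cases ho : oI i ∈ S <;>
            simp [he, ho] at this ⊢
          · exact hb
        · rw [if_neg hb, Finset.mem_filter]
          rw [Bool.not_eq_true] at hb
          rw [hb] at this
          by_cases he : eI i ∈ S <;> by_cases ho : oI i ∈ S <;>
            simp [he, ho, hb] at this ⊢
      · rw [hμ, oI_mem_recon]
        set i := jq μ
        have := hxor i
        by_cases hb : b i = true
        · rw [if_pos hb, Finset.mem_filter]
          rw [hb] at this
          by_cases he : eI i ∈ S <;> by_cases ho : oI i ∈ S <;>
            simp [he, ho] at this ⊢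
          exact hb
        · rw [if_neg hb, Finset.mem_filter]
          rw [Bool.not_eq_true] at hb
          rw [hb] at this
          by_cases he : eI i ∈ S <;> by_cases ho : oI i ∈ S <;>
            simp [he, ho, hb] at this ⊢
    · rintro ⟨A, T⟩ hp
      rw [Finset.mem_product, Finset.mem_powerset, Finset.mem_powersetCard] at hp
      obtain ⟨hA, hT, hTc⟩ := hp
      have e1 : Finset.univ.filter (fun i => b i = true ∧ oI i ∈ recon b A T) = A := by
        ext i
        rw [Finset.mem_filter, oI_mem_recon]
        constructor
        · rintro ⟨_, hb, hi⟩
          rw [if_pos hb] at hi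
          exact hi
        · intro hi
          have hb : b i = true := by
            have := hA hi
            rw [Finset.mem_filter] at this
            exact this.2
          exact ⟨Finset.mem_univ _, hb, by rw [if_pos hb]; exact hi⟩
      have e2 : Finset.univ.filter (fun i => b i = false ∧ eI i ∈ recon b A T) = T := by
        ext i
        rw [Finset.mem_filter, eI_mem_recon]
        constructor
        · rintro ⟨_, hb, hi⟩
          rw [if_neg (by rw [hb]; simp)] at hi
          exact hi
        · intro hi
          have hb : b i = false := by
            have := hT hi
            rw [Finset.mem_filter] at this
            exact this.2
          exact ⟨Finset.mem_univ _, hb, by rw [if_neg (by rw [hb]; simp)]; exact hi⟩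
      simp only [e1, e2]
  rw [key, Finset.card_product, Finset.card_powerset, Finset.card_powersetCard, hct, hcf]
  rw [show hamming b / 2 = m from by omega]
lemma gammaS_mflip (S : Finset (Fin (2 * n))) (r r' : Fin n → Bool) :
    gammaS n S r r' = if r' = mflip S r then qphs (S.sort (· ≤ ·)) r else 0 := by
  rw [gammaS_apply_s14, qflips_sort]

lemma card_filter_false (b : Fin n → Bool) :
    (Finset.univ.filter (fun i : Fin n => b i = false)).card = n - hamming b := by
  have := Finset.card_filter_add_card_filter_not (s := (Finset.univ : Finset (Fin n)))
    (p := fun i => b i = true)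
  simp only [Finset.card_univ, Fintype.card_fin] at this
  have he : (Finset.univ.filter (fun i : Fin n => ¬ b i = true)) =
      (Finset.univ.filter (fun i : Fin n => b i = false)) := by
    ext i; simp [Bool.not_eq_true]
  rw [he] at this
  rw [hamming]
  omega

/-- the negation step for the involution -/
lemma fterm_swap (j : Fin n) (b d c : Fin n → Bool) (hbj : b j = true) (hcj : c j = false)
    (S : Finset (Fin (2 * n))) (he : eI j ∈ S) (ho : oI j ∉ S) :
    (starRingEnd ℂ) (gammaS n (insert (oI j) (S.erase (eI j))) d c)
        * gammaS n (insert (oI j) (S.erase (eI j))) (zv n) b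
      = -((starRingEnd ℂ) (gammaS n S d c) * gammaS n S (zv n) b) := by
  rw [gammaS_mflip, gammaS_mflip, gammaS_mflip, gammaS_mflip]
  rw [mflip_swap j S he ho, mflip_swap j S he ho]
  by_cases h1 : c = mflip S d
  · by_cases h2 : b = mflip S (zv n)
    · rw [if_pos h1, if_pos h2, if_pos h1, if_pos h2]
      rw [qphs_swap j S he ho, qphs_swap j S he ho]
      have hdj : d j = true := by
        have hpatt : xor (decide (eI j ∈ S)) (decide (oI j ∈ S)) = true := by
          simp [he, ho]
        have e1 : c j = xor (d j) (xor (decide (eI j ∈ S)) (decide (oI j ∈ S))) := by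
          rw [h1]; rfl
        rw [hcj, hpatt] at e1
        revert e1; cases d j <;> simp
      rw [hdj, show zv n j = false from rfl]
      rw [if_pos rfl, if_neg (by simp : ¬ (false = true))]
      rw [map_mul (starRingEnd ℂ), Complex.conj_I]
      ring_nf
      rw [Complex.I_sq]
      ring
    · rw [if_pos h1, if_neg h2, if_pos h1, if_neg h2]
      ring
  · rw [if_neg h1, if_neg h1]
    simp

/-- the cancellation lemma -/
lemma sum_cancel (j : Fin n) (b d c : Fin n → Bool) (hbj : b j = true) (hcj : c j = false)
    (l : ℕ) :
    ∑ S ∈ Finset.univ.filter (fun S : Finset (Fin (2 * n)) => S.card = 2 * l),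
      (starRingEnd ℂ) (gammaS n S d c) * gammaS n S (zv n) b = 0 := by
  have hneo : eI j ≠ oI j := eI_ne_oI j j
  have hzero : ∀ S : Finset (Fin (2 * n)),
      ((eI j ∈ S) ↔ (oI j ∈ S)) →
      (starRingEnd ℂ) (gammaS n S d c) * gammaS n S (zv n) b = 0 := by
    intro S hiff
    have hmf : mflip S (zv n) j = false := by
      rw [mflip_zv]
      have hdd : decide (eI j ∈ S) = decide (oI j ∈ S) := by
        by_cases h : eI j ∈ S
        · simp [h, hiff.mp h]
        · have h2 : oI j ∉ S := fun hc => h (hiff.mpr hc)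
          simp [h, h2]
      rw [hdd, Bool.xor_self]
    have hne : ¬ (b = mflip S (zv n)) := by
      intro hc; rw [hc, hmf] at hbj; exact absurd hbj (by simp)
    rw [gammaS_mflip (r := zv n), if_neg hne, mul_zero]
  set g : (S : Finset (Fin (2 * n))) →
      S ∈ Finset.univ.filter (fun S : Finset (Fin (2 * n)) => S.card = 2 * l) →
      Finset (Fin (2 * n)) :=
    fun S _ => if eI j ∈ S then (if oI j ∈ S then S else insert (oI j) (S.erase (eI j)))
      else (if oI j ∈ S then insert (eI j) (S.erase (oI j)) else S) with hg
  apply Finset.sum_involution g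
  · intro S hS
    by_cases he : eI j ∈ S <;> by_cases ho : oI j ∈ S
    · simp only [hg]; rw [if_pos he, if_pos ho]
      rw [hzero S (by tauto)]; norm_num
    · simp only [hg]; rw [if_pos he, if_neg ho]
      rw [fterm_swap j b d c hbj hcj S he ho]; ring
    · simp only [hg]; rw [if_neg he, if_pos ho]
      set S' := insert (eI j) (S.erase (oI j)) with hS'
      have he' : eI j ∈ S' := Finset.mem_insert_self _ _
      have ho' : oI j ∉ S' := by
        rw [hS', Finset.mem_insert, Finset.mem_erase]
        rintro (h | ⟨h, _⟩)
        · exact hneo h.symm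
        · exact h rfl
      have hback : insert (oI j) (S'.erase (eI j)) = S := by
        rw [hS', Finset.erase_insert (fun hc => he (Finset.mem_of_mem_erase hc)),
          Finset.insert_erase ho]
      have := fterm_swap j b d c hbj hcj S' he' ho'
      rw [hback] at this
      rw [this]; ring
    · simp only [hg]; rw [if_neg he, if_neg ho]
      rw [hzero S (by tauto)]; norm_num
  · intro S hS hfS
    by_cases he : eI j ∈ S <;> by_cases ho : oI j ∈ S
    · exact absurd (hzero S (by tauto)) hfS
    · simp only [hg]; rw [if_pos he, if_neg ho]
      intro hc
      exact ho (by rw [← hc]; exact Finset.mem_insert_self _ _)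
    · simp only [hg]; rw [if_neg he, if_pos ho]
      intro hc
      exact he (by rw [← hc]; exact Finset.mem_insert_self _ _)
    · exact absurd (hzero S (by tauto)) hfS
  · intro S hS
    by_cases he : eI j ∈ S <;> by_cases ho : oI j ∈ S
    · simp only [hg]; rw [if_pos he, if_pos ho, if_pos he, if_pos ho]
    · simp only [hg]; rw [if_pos he, if_neg ho]
      have h1 : eI j ∉ insert (oI j) (S.erase (eI j)) := by
        rw [Finset.mem_insert, Finset.mem_erase]
        rintro (h | ⟨h, _⟩)
        · exact hneo h
        · exact h rfl
      have h2 : oI j ∈ insert (oI j) (S.erase (eI j)) := Finset.mem_insert_self _ _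
      rw [if_neg h1, if_pos h2]
      rw [Finset.erase_insert (fun hc => ho (Finset.mem_of_mem_erase hc)),
        Finset.insert_erase he]
    · simp only [hg]; rw [if_neg he, if_pos ho]
      have h1 : eI j ∈ insert (eI j) (S.erase (oI j)) := Finset.mem_insert_self _ _
      have h2 : oI j ∉ insert (eI j) (S.erase (oI j)) := by
        rw [Finset.mem_insert, Finset.mem_erase]
        rintro (h | ⟨h, _⟩)
        · exact hneo h.symm
        · exact h rfl
      rw [if_pos h1, if_neg h2]
      rw [Finset.erase_insert (fun hc => he (Finset.mem_of_mem_erase hc)),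
        Finset.insert_erase ho]
    · simp only [hg]; rw [if_neg he, if_neg ho, if_neg he, if_neg ho]
  · intro S hS
    rw [Finset.mem_filter] at hS ⊢
    refine ⟨Finset.mem_univ _, ?_⟩
    by_cases he : eI j ∈ S <;> by_cases ho : oI j ∈ S
    · simp only [hg]; rw [if_pos he, if_pos ho]; exact hS.2
    · simp only [hg]; rw [if_pos he, if_neg ho]
      rw [Finset.card_insert_of_notMem (by
        rw [Finset.mem_erase]; rintro ⟨_, h⟩; exact ho h)]
      rw [Finset.card_erase_of_mem he]
      have : 1 ≤ S.card := Finset.card_pos.mpr ⟨_, he⟩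
      omega
    · simp only [hg]; rw [if_neg he, if_pos ho]
      rw [Finset.card_insert_of_notMem (by
        rw [Finset.mem_erase]; rintro ⟨_, h⟩; exact he h)]
      rw [Finset.card_erase_of_mem ho]
      have : 1 ≤ S.card := Finset.card_pos.mpr ⟨_, ho⟩
      omega
    · simp only [hg]; rw [if_neg he, if_neg ho]; exact hS.2
lemma sum_target (b : Fin n → Bool) (l : ℕ) :
    ∑ S ∈ Finset.univ.filter (fun S : Finset (Fin (2 * n)) => S.card = 2 * l),
      (starRingEnd ℂ) (gammaS n S (zv n) b) * gammaS n S (zv n) b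
    = ((Finset.univ.filter (fun S : Finset (Fin (2 * n)) =>
        S.card = 2 * l ∧ mflip S (zv n) = b)).card : ℂ) := by
  have hterm : ∀ S : Finset (Fin (2 * n)),
      (starRingEnd ℂ) (gammaS n S (zv n) b) * gammaS n S (zv n) b
      = if mflip S (zv n) = b then 1 else 0 := by
    intro S
    rw [gammaS_mflip]
    by_cases h : b = mflip S (zv n)
    · rw [if_pos h, if_pos h.symm, mul_comm]
      exact qphs_mul_conj _ _
    · rw [if_neg h, if_neg (fun hc => h hc.symm)]
      simp
  rw [Finset.sum_congr rfl (fun S _ => hterm S), Finset.sum_boole, Finset.filter_filter]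

lemma filter_mflip_empty (b : Fin n → Bool) (l : ℕ) (hev : Even (hamming b))
    (hout : ¬ (hamming b / 2 ≤ l ∧ l + hamming b / 2 ≤ n)) :
    Finset.univ.filter (fun S : Finset (Fin (2 * n)) =>
      S.card = 2 * l ∧ mflip S (zv n) = b) = ∅ := by
  rw [Finset.filter_eq_empty_iff]
  rintro S _ ⟨hcard, hmf⟩
  have h1 := card_structure b S hmf
  have h2 : (Finset.univ.filter (fun i => b i = false ∧ eI i ∈ S)).card ≤ n - hamming b := by
    calc (Finset.univ.filter (fun i => b i = false ∧ eI i ∈ S)).card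
        ≤ (Finset.univ.filter (fun i : Fin n => b i = false)).card := by
          apply Finset.card_le_card
          intro i hi
          rw [Finset.mem_filter] at hi ⊢
          exact ⟨hi.1, hi.2.1⟩
      _ = n - hamming b := card_filter_false b
  have h3 : hamming b ≤ n := by
    rw [← card_filter_false b] at h2
    have : hamming b ≤ Fintype.card (Fin n) := by
      rw [hamming]
      exact le_trans (Finset.card_le_card (Finset.filter_subset _ _)) (le_of_eq (by simp))
    simpa using this
  obtain ⟨m, hm⟩ := hev
  omega

lemma hamming_zv : hamming (zv n) = 0 := by
  rw [hamming]
  simp [zv]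

lemma exists_good_j (ζ : ℕ) (hζ0 : 0 < ζ) (b d c : Fin n → Bool)
    (hb : hamming b = ζ) (hd : d = zv n ∨ hamming d = ζ) (hc : c = zv n ∨ hamming c = ζ)
    (hcd : c = fun i => xor (d i) (b i)) (hne : ¬ (d = zv n ∧ c = b)) :
    ∃ j : Fin n, b j = true ∧ c j = false := by
  by_contra hcon
  push_neg at hcon
  have hbc : ∀ j, b j = true → c j = true := by
    intro j hj
    have := hcon j hj
    revert this; cases c j <;> simp
  rcases hd with rfl | hdh
  · apply hne
    refine ⟨rfl, ?_⟩
    rw [hcd]; funext i; simp [zv]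
  · have hdc : ∀ j, d j = true → c j = true := by
      intro j hj
      by_cases hbj : b j = true
      · exact hbc j hbj
      · rw [Bool.not_eq_true] at hbj
        rw [hcd]; simp [hj, hbj]
    have hdisj : Disjoint (Finset.univ.filter (fun j => d j = true))
        (Finset.univ.filter (fun j => b j = true)) := by
      rw [Finset.disjoint_filter]
      intro j _ h1 h2
      have h3 := hbc j h2
      rw [hcd] at h3
      simp [h1, h2] at h3
    have hunion : (Finset.univ.filter (fun j => d j = true))
        ∪ (Finset.univ.filter (fun j => b j = true))
        ⊆ Finset.univ.filter (fun j => c j = true) := by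
      intro j hj
      rw [Finset.mem_union, Finset.mem_filter, Finset.mem_filter] at hj
      rw [Finset.mem_filter]
      rcases hj with ⟨_, h⟩ | ⟨_, h⟩
      · exact ⟨Finset.mem_univ _, hdc j h⟩
      · exact ⟨Finset.mem_univ _, hbc j h⟩
    have hcard : 2 * ζ ≤ hamming c := by
      have e1 : hamming d + hamming b =
          ((Finset.univ.filter (fun j => d j = true))
            ∪ (Finset.univ.filter (fun j => b j = true))).card :=
        (Finset.card_union_of_disjoint hdisj).symm
      have e2 := Finset.card_le_card hunion
      rw [← e1] at e2
      have e3 : (Finset.univ.filter (fun j => c j = true)).card = hamming c := rfl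
      rw [e3] at e2
      omega
    rcases hc with rfl | hch
    · rw [hamming_zv] at hcard; omega
    · omega

lemma key_sum (ζ : ℕ) (hζ0 : 0 < ζ) (hζn : ζ ≤ n) (hζeven : Even ζ) (l : ℕ)
    (b d c : Fin n → Bool) (hb : hamming b = ζ)
    (hd : d = zv n ∨ hamming d = ζ) (hc : c = zv n ∨ hamming c = ζ) :
    ∑ S ∈ Finset.univ.filter (fun S : Finset (Fin (2 * n)) => S.card = 2 * l),
      (starRingEnd ℂ) (gammaS n S d c) * gammaS n S (zv n) b
    = if d = zv n ∧ c = b then (2:ℂ)^n * bcoef n ζ l else 0 := by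
  subst hb
  by_cases htgt : d = zv n ∧ c = b
  · obtain ⟨hd0, hcb⟩ := htgt
    subst hd0; subst c
    rw [if_pos ⟨rfl, rfl⟩, sum_target]
    by_cases hrange : hamming b / 2 ≤ l ∧ l + hamming b / 2 ≤ n
    · rw [count_mflip b l hrange hζeven]
      rw [bcoef, if_pos hrange]
      have h2n : (2:ℂ)^n ≠ 0 := pow_ne_zero _ two_ne_zero
      push_cast
      field_simp
    · rw [filter_mflip_empty b l hζeven hrange]
      rw [bcoef, if_neg hrange]
      simp
  · rw [if_neg htgt]
    by_cases hcd : c = fun i => xor (d i) (b i)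
    · obtain ⟨j, hbj, hcj⟩ := exists_good_j (hamming b) hζ0 b d c rfl hd hc hcd htgt
      exact sum_cancel j b d c hbj hcj l
    · apply Finset.sum_eq_zero
      intro S _
      rw [gammaS_mflip, gammaS_mflip]
      by_cases h2 : b = mflip S (zv n)
      · have hnot : ¬ (c = mflip S d) := by
          intro h1
          apply hcd
          rw [h1]
          funext i
          have hbi : b i = xor (decide (eI i ∈ S)) (decide (oI i ∈ S)) := by
            rw [h2, mflip_zv]
          rw [mflip, ← hbi]
        rw [if_neg hnot]
        simp
      · rw [if_neg h2, mul_zero]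

/-- for `X` supported on the `{0,ζ}` subspace and `|φ⟩` supported on
Hamming weight `ζ`, `tr(|φ⟩⟨0…0| Π_{2l}(X)) = b_{2l} tr(|φ⟩⟨0…0| X)`. -/
theorem trace_eigen_operator (n ζ : ℕ) (hn : 1 ≤ n) (hζ0 : 0 < ζ) (hζn : ζ ≤ n)
    (hζeven : Even ζ) (φ : QState n)
    (hφ : ∀ b : Fin n → Bool, φ b ≠ 0 → hamming b = ζ)
    (X : QOp n) (hX : X = projZeroZeta n ζ * X * projZeroZeta n ζ) :
    ∀ l : ℕ, l ≤ n →
      Matrix.trace (outer φ (ket0 n) * PiEven n l X)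
        = bcoef n ζ l * Matrix.trace (outer φ (ket0 n) * X) := by
  intro l _
  have h2n : (2:ℂ)^n ≠ 0 := pow_ne_zero _ two_ne_zero
  have htr : ∀ M : QOp n, Matrix.trace (outer φ (ket0 n) * M)
      = ∑ b : Fin n → Bool, φ b * M (zv n) b := by
    intro M
    rw [Matrix.trace]
    refine Finset.sum_congr rfl (fun b _ => ?_)
    rw [Matrix.diag_apply, Matrix.mul_apply]
    rw [Finset.sum_eq_single (zv n)]
    · rw [outer, Matrix.of_apply]
      have h1 : ket0 n (zv n) = 1 := if_pos rfl
      rw [h1]; simp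
    · intro c _ hc
      rw [outer, Matrix.of_apply]
      have h1 : ket0 n c = 0 := if_neg hc
      rw [h1]; simp
    · intro h; exact absurd (Finset.mem_univ _) h
  have hXsupp : ∀ d c : Fin n → Bool,
      (¬ (d = zv n ∨ hamming d = ζ)) ∨ (¬ (c = zv n ∨ hamming c = ζ)) → X d c = 0 := by
    intro d c hdc
    have hE : X d c = (projZeroZeta n ζ * X * projZeroZeta n ζ) d c := by rw [← hX]
    rw [projZeroZeta, Matrix.mul_diagonal, Matrix.diagonal_mul] at hE
    rw [show (fun _ : Fin n => false) = zv n from rfl] at hE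
    rcases hdc with h | h
    · rw [if_neg (fun hcc => h hcc), zero_mul, zero_mul] at hE; exact hE
    · rw [if_neg (fun hcc => h hcc), mul_zero] at hE; exact hE
  have htrg : ∀ S : Finset (Fin (2*n)), Matrix.trace ((gammaS n S)ᴴ * X)
      = ∑ c : Fin n → Bool, ∑ d : Fin n → Bool,
          (starRingEnd ℂ) (gammaS n S d c) * X d c := by
    intro S
    rw [Matrix.trace]
    refine Finset.sum_congr rfl (fun c _ => ?_)
    rw [Matrix.diag_apply, Matrix.mul_apply]
    refine Finset.sum_congr rfl (fun d _ => ?_)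
    rw [Matrix.conjTranspose_apply, starRingEnd_apply]
  have hPi : ∀ b : Fin n → Bool, PiEven n l X (zv n) b
      = ((2:ℂ)^n)⁻¹ * ∑ S ∈ Finset.univ.filter
            (fun S : Finset (Fin (2*n)) => S.card = 2*l),
          Matrix.trace ((gammaS n S)ᴴ * X) * gammaS n S (zv n) b := by
    intro b
    rw [PiEven, Matrix.smul_apply, Matrix.sum_apply, smul_eq_mul]
    congr 1
  have hkey : ∀ b : Fin n → Bool, hamming b = ζ →
      ∑ S ∈ Finset.univ.filter (fun S : Finset (Fin (2*n)) => S.card = 2*l),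
        Matrix.trace ((gammaS n S)ᴴ * X) * gammaS n S (zv n) b
      = (2:ℂ)^n * bcoef n ζ l * X (zv n) b := by
    intro b hb
    have step1 : ∑ S ∈ Finset.univ.filter (fun S : Finset (Fin (2*n)) => S.card = 2*l),
        Matrix.trace ((gammaS n S)ᴴ * X) * gammaS n S (zv n) b
        = ∑ c : Fin n → Bool, ∑ d : Fin n → Bool,
            (∑ S ∈ Finset.univ.filter (fun S : Finset (Fin (2*n)) => S.card = 2*l),
              (starRingEnd ℂ) (gammaS n S d c) * gammaS n S (zv n) b) * X d c := by
      have e1 : ∀ S ∈ Finset.univ.filter (fun S : Finset (Fin (2*n)) => S.card = 2*l),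
          Matrix.trace ((gammaS n S)ᴴ * X) * gammaS n S (zv n) b
          = ∑ c : Fin n → Bool, ∑ d : Fin n → Bool,
              ((starRingEnd ℂ) (gammaS n S d c) * gammaS n S (zv n) b) * X d c := by
        intro S _
        rw [htrg S, Finset.sum_mul]
        refine Finset.sum_congr rfl (fun c _ => ?_)
        rw [Finset.sum_mul]
        refine Finset.sum_congr rfl (fun d _ => ?_)
        ring
      rw [Finset.sum_congr rfl e1]
      rw [Finset.sum_comm]
      refine Finset.sum_congr rfl (fun c _ => ?_)
      rw [Finset.sum_comm]
      refine Finset.sum_congr rfl (fun d _ => ?_)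
      rw [Finset.sum_mul]
    rw [step1]
    have step2 : ∀ c d : Fin n → Bool,
        (∑ S ∈ Finset.univ.filter (fun S : Finset (Fin (2*n)) => S.card = 2*l),
          (starRingEnd ℂ) (gammaS n S d c) * gammaS n S (zv n) b) * X d c
        = (if d = zv n ∧ c = b then (2:ℂ)^n * bcoef n ζ l else 0) * X d c := by
      intro c d
      by_cases hsup : (d = zv n ∨ hamming d = ζ) ∧ (c = zv n ∨ hamming c = ζ)
      · rw [key_sum ζ hζ0 hζn hζeven l b d c hb hsup.1 hsup.2]
      · rw [not_and_or] at hsup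
        rw [hXsupp d c hsup, mul_zero, mul_zero]
    rw [Finset.sum_congr rfl (fun c _ => Finset.sum_congr rfl (fun d _ => step2 c d))]
    rw [Finset.sum_eq_single b]
    · rw [Finset.sum_eq_single (zv n)]
      · rw [if_pos ⟨rfl, rfl⟩]
      · intro d _ hd
        rw [if_neg (fun hcc => hd hcc.1), zero_mul]
      · intro h; exact absurd (Finset.mem_univ _) h
    · intro c _ hcne
      apply Finset.sum_eq_zero
      intro d _
      rw [if_neg (fun hcc => hcne hcc.2), zero_mul]
    · intro h; exact absurd (Finset.mem_univ _) h
  rw [htr (PiEven n l X), htr X, Finset.mul_sum]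
  refine Finset.sum_congr rfl (fun b _ => ?_)
  by_cases hb0 : φ b = 0
  · rw [hb0]; ring
  · have hb := hφ b hb0
    rw [hPi b, hkey b hb]
    field_simp

end QCQMC

end
end
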